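/- arXiv:1311.2154 — 11 statements merged into one kernel-verified Lean document; each statement's English description precedes it below -/
import Mathlib

section
/- The linearized binomial L_r(x) = x^{q^r} + a x over F_{q^n} is a permutation polynomial of F_{q^n} if and only if (-1)^{n/d} · a^{(q^n-1)/(q^d-1)} ≠ 1, where d = gcd(n, r). -/
/-!
As `x ↦ x ^ q ^ r` is additive, `L_r` is an additive endomorphism of the finite field `F`, so it
is bijective iff it has no nonzero root, i.e. iff `-a` is not a `(q ^ r - 1)`-th power in the
cyclic group `Fˣ` of order `q ^ n - 1`. In a cyclic group of order `N`, `u` is an `m`-th power iff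
`u ^ (N / gcd N m) = 1`, and `gcd (q ^ n - 1) (q ^ r - 1) = q ^ d - 1`. Finally
`(q ^ n - 1) / (q ^ d - 1) = ∑ i < n / d, (q ^ d) ^ i` is a sum of `n / d` powers of the
characteristic `p`, and `(-1) ^ p ^ j = -1`, which turns `(-a) ^ ((q ^ n - 1) / (q ^ d - 1))` into
`(-1) ^ (n / d) * a ^ ((q ^ n - 1) / (q ^ d - 1))`.
-/

open Finset

theorem IsCyclic.range_powMonoidHom_eq_ker {G : Type*} [CommGroup G] [IsCyclic G] [Finite G]
    (m : ℕ) :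
    (powMonoidHom m : G →* G).range = (powMonoidHom (Nat.card G / (Nat.card G).gcd m)).ker := by
  refine Subgroup.eq_of_le_of_card_ge ?_ ?_
  · rintro _ ⟨y, rfl⟩
    rw [MonoidHom.mem_ker, powMonoidHom_apply, powMonoidHom_apply, ← pow_mul,
      ← Nat.mul_div_assoc _ (Nat.gcd_dvd_left _ _), mul_comm,
      Nat.mul_div_assoc _ (Nat.gcd_dvd_right _ _), pow_mul, pow_card_eq_one', one_pow]
  · rw [IsCyclic.card_powMonoidHom_ker, IsCyclic.card_powMonoidHom_range,
      Nat.gcd_eq_right (Nat.div_dvd_of_dvd (Nat.gcd_dvd_left _ _))]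

theorem IsCyclic.exists_pow_eq_iff {G : Type*} [CommGroup G] [IsCyclic G] [Finite G]
    (m : ℕ) (u : G) :
    (∃ y : G, y ^ m = u) ↔ u ^ (Nat.card G / (Nat.card G).gcd m) = 1 := by
  simpa using SetLike.ext_iff.mp (IsCyclic.range_powMonoidHom_eq_ker (G := G) m) u

theorem FiniteField.exists_unit_pow_eq_iff {F : Type*} [Field F] [Finite F] (m : ℕ) (b : F) :
    (∃ y : Fˣ, (y : F) ^ m = b) ↔ b ^ ((Nat.card F - 1) / (Nat.card F - 1).gcd m) = 1 := by
  rcases eq_or_ne b 0 with rfl | hb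
  · have hpos : 0 < (Nat.card F - 1) / (Nat.card F - 1).gcd m := by
      rw [← Nat.card_units]
      exact Nat.div_pos (Nat.gcd_le_left _ Nat.card_pos) (Nat.gcd_pos_of_pos_left _ Nat.card_pos)
    simp [zero_pow hpos.ne']
  · lift b to Fˣ using hb.isUnit
    rw [← Nat.card_units, ← Units.val_pow_eq_pow_val, Units.val_eq_one,
      ← IsCyclic.exists_pow_eq_iff]
    simp only [← Units.val_pow_eq_pow_val, Units.val_inj]

theorem neg_one_pow_geom_sum {R : Type*} [Monoid R] [HasDistribNeg R] {Q : ℕ}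
    (hQ : (-1 : R) ^ Q = -1) (M : ℕ) : (-1 : R) ^ (∑ i ∈ range M, Q ^ i) = (-1) ^ M := by
  have hpow (i : ℕ) : (-1 : R) ^ Q ^ i = -1 := by
    induction i with
    | zero => simp
    | succ i ih => rw [pow_succ, pow_mul, ih, hQ]
  induction M with
  | zero => simp
  | succ M ih => rw [sum_range_succ, pow_add, ih, hpow, pow_succ]

theorem bijective_pow_expChar_pow_add_mul_iff {F : Type*} [Field F] [Finite F] (p m : ℕ)
    [ExpChar F p] (a : F) :
    Function.Bijective (fun x : F => x ^ p ^ m + a * x) ↔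
      ¬∃ y : Fˣ, (y : F) ^ (p ^ m - 1) = -a := by
  let L : F →+ F := (iterateFrobenius F p m).toAddMonoidHom + AddMonoidHom.mulLeft a
  have hpos : 0 < p ^ m := expChar_pow_pos F p m
  change Function.Bijective L ↔ _
  rw [← Finite.injective_iff_bijective, injective_iff_map_eq_zero, not_exists]
  refine ⟨fun h y hy => y.ne_zero (h y ?_), fun h x hx => ?_⟩
  · change (y : F) ^ p ^ m + a * y = 0
    rw [← Nat.sub_add_cancel hpos, pow_succ, hy]
    ring
  · by_contra hx0
    have hfactor : (x ^ (p ^ m - 1) + a) * x = 0 := by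
      rw [add_mul, ← pow_succ, Nat.sub_add_cancel hpos]
      exact hx
    exact h (Units.mk0 x hx0)
      (eq_neg_of_add_eq_zero_left ((mul_eq_zero.mp hfactor).resolve_right hx0))

theorem stmt_0_general (q n r : ℕ) (hq : IsPrimePow q)
    (F : Type*) [Field F] [Fintype F] (hF : Fintype.card F = q ^ n) (a : F) :
    Function.Bijective (fun x : F => x ^ q ^ r + a * x) ↔
      (-1 : F) ^ (n / Nat.gcd n r) * a ^ ((q ^ n - 1) / (q ^ Nat.gcd n r - 1)) ≠ 1 := by
  obtain ⟨p, k, hp, hk, hpk⟩ := hq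
  rw [← Nat.prime_iff] at hp
  have : Fact p.Prime := ⟨hp⟩
  have hqpow (m : ℕ) : q ^ m = p ^ (k * m) := by rw [← hpk, pow_mul]
  have : CharP F p := charP_of_card_eq_prime_pow (by rw [hF, hqpow])
  have hn : n ≠ 0 := by
    rintro rfl
    exact Fintype.one_lt_card.ne' (by simpa using hF)
  set d := n.gcd r
  have hsign : (-1 : F) ^ ((q ^ n - 1) / (q ^ d - 1)) = (-1) ^ (n / d) := by
    have hq : 1 < q := hpk ▸ Nat.one_lt_pow hk.ne' hp.one_lt
    have hqd : 2 ≤ q ^ d := Nat.one_lt_pow (Nat.gcd_ne_zero_left hn) hq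
    have hgeom := Nat.geomSum_eq hqd (n / d)
    rw [← pow_mul, Nat.mul_div_cancel' (Nat.gcd_dvd_left n r)] at hgeom
    rw [← hgeom]
    exact neg_one_pow_geom_sum (by rw [hqpow]; exact neg_one_pow_char_pow F p _) _
  rw [hqpow r, bijective_pow_expChar_pow_add_mul_iff, FiniteField.exists_unit_pow_eq_iff,
    Nat.card_eq_fintype_card, hF, ← hqpow, Nat.pow_sub_one_gcd_pow_sub_one, neg_pow, hsign]

/-- The linearized binomial `L_r(x) = x^{q^r} + a x` over `F_{q^n}` is a permutation
polynomial of `F_{q^n}` iff `(-1)^{n/d} a^{(q^n-1)/(q^d-1)} ≠ 1`, where `d = gcd(n,r)`. -/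
theorem stmt_0 (q n r : ℕ) (hq : IsPrimePow q) (hr : 1 ≤ r) (hrn : r ≤ n - 1)
    (F : Type*) [Field F] [Fintype F] (hF : Fintype.card F = q ^ n) (a : F) :
    Function.Bijective (fun x : F => x ^ q ^ r + a * x) ↔
      (-1 : F) ^ (n / Nat.gcd n r) * a ^ ((q ^ n - 1) / (q ^ Nat.gcd n r - 1)) ≠ 1 :=
  stmt_0_general q n r hq F hF a
end

section
/- If (-1)^{n/d} · N(a) ≠ 1 where N(a) = a^{(q^n-1)/(q^d-1)} and d = gcd(n,r), then the compositional inverse of L_r(x) = x^{q^r} + a x on F_{q^n} is given by L_r^{-1}(x) = [N(a) / (N(a) + (-1)^{n/d - 1})] · Σ_{i=0}^{n/d - 1} (-1)^i a^{-(q^{(i+1)r}-1)/(q^r-1)} x^{q^{ir}}. -/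
open Finset

private lemma geom_mul' (b k : ℕ) : (b - 1) * ∑ j ∈ range k, b ^ j = b ^ k - 1 := by
  induction k with
  | zero => simp
  | succ k ih =>
    rcases Nat.eq_zero_or_pos b with hb | hb
    · subst hb; simp
    rw [sum_range_succ, Nat.mul_add, ih]
    have h1 : 1 ≤ b ^ k := Nat.one_le_pow _ _ hb
    have h2 : b ^ k ≤ b ^ (k + 1) := Nat.pow_le_pow_right hb (by omega)
    have h3 : (b - 1) * b ^ k = b ^ (k + 1) - b ^ k := by
      rw [Nat.sub_mul, one_mul, ← pow_succ']
    omega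

private lemma geom_div' (b k : ℕ) (hb : 2 ≤ b) :
    (b ^ k - 1) / (b - 1) = ∑ j ∈ range k, b ^ j := by
  rw [← geom_mul' b k, Nat.mul_div_cancel_left _ (by omega)]

/-- If `(-1)^{n/d} N(a) ≠ 1` where `N(a) = a^{(q^n-1)/(q^d-1)}` and `d = gcd(n,r)`, then the
compositional inverse of `L_r(x) = x^{q^r} + a x` on `F_{q^n}` is
`x ↦ [N(a)/(N(a)+(-1)^{n/d-1})] ∑_{i=0}^{n/d-1} (-1)^i a^{-(q^{(i+1)r}-1)/(q^r-1)} x^{q^{ir}}`. -/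
theorem stmt_3 (q n r : ℕ) (hq : IsPrimePow q) (hr : 1 ≤ r) (hrn : r ≤ n - 1)
    (F : Type*) [Field F] [Fintype F] (hF : Fintype.card F = q ^ n)
    (a : F) (ha : a ≠ 0) (d : ℕ) (hd : d = Nat.gcd n r)
    (N : F) (hN : N = a ^ ((q ^ n - 1) / (q ^ d - 1)))
    (hcond : (-1 : F) ^ (n / d) * N ≠ 1) :
    ∀ x : F,
      ((N / (N + (-1) ^ (n / d - 1)) *
          ∑ i ∈ Finset.range (n / d),
            (-1 : F) ^ i * a⁻¹ ^ ((q ^ ((i + 1) * r) - 1) / (q ^ r - 1)) * x ^ q ^ (i * r))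
            ^ q ^ r
        + a * (N / (N + (-1) ^ (n / d - 1)) *
          ∑ i ∈ Finset.range (n / d),
            (-1 : F) ^ i * a⁻¹ ^ ((q ^ ((i + 1) * r) - 1) / (q ^ r - 1)) * x ^ q ^ (i * r))
        = x)
      ∧ N / (N + (-1) ^ (n / d - 1)) *
          ∑ i ∈ Finset.range (n / d),
            (-1 : F) ^ i * a⁻¹ ^ ((q ^ ((i + 1) * r) - 1) / (q ^ r - 1)) *
              (x ^ q ^ r + a * x) ^ q ^ (i * r)
        = x := by
  intro x
  -- prime power basics
  obtain ⟨p0, k, hp0p, hk, hq0⟩ := hq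
  have hp0 : Nat.Prime p0 := Nat.prime_iff.mpr hp0p
  have hq2 : 2 ≤ q := by
    have h1 : p0 ≤ p0 ^ k := Nat.le_self_pow (by omega) p0
    have := hp0.two_le
    omega
  have hn2 : 2 ≤ n := by omega
  -- gcd facts
  have hdn : d ∣ n := hd ▸ Nat.gcd_dvd_left n r
  have hdr : d ∣ r := hd ▸ Nat.gcd_dvd_right n r
  have hdpos : 0 < d := hd ▸ Nat.gcd_pos_of_pos_left r (by omega)
  set m := n / d with hm_def
  have hm : 0 < m := Nat.div_pos (Nat.le_of_dvd (by omega) hdn) hdpos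
  have hnm : d * m = n := Nat.mul_div_cancel' hdn
  set r' := r / d with hr'_def
  have hrr' : d * r' = r := Nat.mul_div_cancel' hdr
  have hcop : Nat.Coprime r' m := by
    have := Nat.coprime_div_gcd_div_gcd (m := r) (n := n) (by rw [Nat.gcd_comm, ← hd]; omega)
    rwa [Nat.gcd_comm r n, ← hd] at this
  -- characteristic
  obtain ⟨t, hp_pr, hcard⟩ := FiniteField.card F (ringChar F)
  set p := ringChar F with hp_def
  have hqn_pt : q ^ n = p ^ (t : ℕ) := by rw [← hF, hcard]
  have hp0p' : p0 = p := by
    have h1 : p0 ∣ p ^ (t : ℕ) := by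
      rw [← hqn_pt, ← hq0]
      exact dvd_pow (dvd_pow_self p0 (by omega)) (by omega)
    exact (Nat.prime_dvd_prime_iff_eq hp0 hp_pr).mp (hp0.dvd_of_dvd_pow h1)
  have hqp : q = p ^ k := by rw [← hq0, hp0p']
  haveI : Fact p.Prime := ⟨hp_pr⟩
  have hpe : ∀ e : ℕ, q ^ e = p ^ (k * e) := by
    intro e; rw [hqp, ← pow_mul]
  -- additivity of power maps
  have hadd : ∀ (e : ℕ) (u v : F), (u + v) ^ q ^ e = u ^ q ^ e + v ^ q ^ e := by
    intro e u v; rw [hpe e]; exact add_pow_char_pow u v p (k * e)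
  have hqe0 : ∀ e : ℕ, q ^ e ≠ 0 := by intro e; positivity
  have hpowsum : ∀ (e : ℕ) (s : Finset ℕ) (f : ℕ → F),
      (∑ i ∈ s, f i) ^ q ^ e = ∑ i ∈ s, f i ^ q ^ e := by
    intro e s f
    induction s using Finset.cons_induction with
    | empty => simp [zero_pow (by positivity : q ^ e ≠ 0)]
    | cons i s hi ih => rw [Finset.sum_cons, Finset.sum_cons, hadd, ih]
  have hneg1 : ∀ e : ℕ, (-1 : F) ^ q ^ e = -1 := by
    intro e
    have h := hadd e (-1) 1
    rw [neg_add_cancel, one_pow, zero_pow (by positivity : q ^ e ≠ 0)] at h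
    exact eq_neg_of_add_eq_zero_left h.symm
  -- field power facts
  have hbigpow : ∀ (c : ℕ) (y : F), y ^ (q ^ n) ^ c = y := by
    intro c y; rw [← hF]; exact FiniteField.pow_card_pow c y
  have ha1 : a ^ (q ^ n - 1) = 1 := by
    have := FiniteField.pow_card_sub_one_eq_one a ha; rwa [hF] at this
  -- geometric sums
  have hb2 : 2 ≤ q ^ r := le_trans hq2 (Nat.le_self_pow (by omega) q)
  have hqd2 : 2 ≤ q ^ d := le_trans hq2 (Nat.le_self_pow (by omega) q)
  set E : ℕ → ℕ := fun i => ∑ j ∈ range i, (q ^ r) ^ j with hE_def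
  have hdiv : ∀ i : ℕ, (q ^ ((i + 1) * r) - 1) / (q ^ r - 1) = E (i + 1) := by
    intro i
    rw [mul_comm (i + 1) r, pow_mul]
    exact geom_div' (q ^ r) (i + 1) hb2
  have hE0 : E 0 = 0 := by simp [hE_def]
  have hE1 : E 1 = 1 := by simp [hE_def]
  have hErec : ∀ i : ℕ, E (i + 2) = E (i + 1) * q ^ r + 1 := by
    intro i
    show (∑ j ∈ range (i + 2), (q ^ r) ^ j) = (∑ j ∈ range (i + 1), (q ^ r) ^ j) * q ^ r + 1
    rw [sum_range_succ', sum_mul]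
    simp [pow_succ]
  have hEsucc : ∀ i : ℕ, E (i + 1) = E i + q ^ (i * r) := by
    intro i
    show (∑ j ∈ range (i + 1), (q ^ r) ^ j) = (∑ j ∈ range i, (q ^ r) ^ j) + q ^ (i * r)
    rw [sum_range_succ, mul_comm i r, pow_mul]
  have hA1 : ∀ i : ℕ, (a⁻¹ ^ E (i + 1)) ^ q ^ r = a * a⁻¹ ^ E (i + 2) := by
    intro i
    rw [hErec i, pow_add, pow_one, ← pow_mul]
    field_simp
  have hA2 : ∀ i : ℕ, a⁻¹ ^ E (i + 1) * a ^ q ^ (i * r) = a⁻¹ ^ E i := by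
    intro i
    rw [hEsucc i, pow_add, mul_assoc, inv_pow a (q ^ (i * r)), inv_mul_cancel₀ (pow_ne_zero _ ha), mul_one]
  -- the norm
  have hKsum : (q ^ n - 1) / (q ^ d - 1) = ∑ j ∈ range m, (q ^ d) ^ j := by
    rw [← hnm, pow_mul]
    exact geom_div' (q ^ d) m hqd2
  have hgmod : ∀ s : ℕ, a ^ q ^ (d * s) = a ^ q ^ (d * (s % m)) := by
    intro s
    conv_lhs => rw [show d * s = n * (s / m) + d * (s % m) by
      conv_lhs => rw [← Nat.div_add_mod s m]
      rw [← hnm]; ring]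
    rw [pow_add, pow_mul q n (s / m), pow_mul a, hbigpow]
  have hs1 : r' * r' ^ (m.totient - 1) ≡ 1 [MOD m] := by
    have ht : 0 < m.totient := Nat.totient_pos.mpr hm
    rw [← pow_succ', show m.totient - 1 + 1 = m.totient by omega]
    exact Nat.ModEq.pow_totient hcop
  have hbij : ∏ j ∈ range m, a ^ q ^ (d * (r' * j % m)) = ∏ j ∈ range m, a ^ q ^ (d * j) := by
    refine Finset.prod_nbij' (fun j => r' * j % m) (fun j => r' ^ (m.totient - 1) * j % m)
      (fun j _ => mem_range.mpr (Nat.mod_lt _ hm)) (fun j _ => mem_range.mpr (Nat.mod_lt _ hm))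
      ?_ ?_ (fun j _ => rfl)
    · intro j hj
      show r' ^ (m.totient - 1) * (r' * j % m) % m = j
      have h2 : r' ^ (m.totient - 1) * (r' * j % m) ≡ r' ^ (m.totient - 1) * (r' * j) [MOD m] :=
        Nat.ModEq.mul_left _ (Nat.mod_modEq _ m)
      have h4 : r' * r' ^ (m.totient - 1) * j ≡ 1 * j [MOD m] := Nat.ModEq.mul_right j hs1
      have h5 : r' ^ (m.totient - 1) * (r' * j % m) ≡ j [MOD m] := by
        calc r' ^ (m.totient - 1) * (r' * j % m) ≡ r' ^ (m.totient - 1) * (r' * j) [MOD m] := h2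
        _ = r' * r' ^ (m.totient - 1) * j := by ring
        _ ≡ 1 * j [MOD m] := h4
        _ = j := one_mul j
      rw [Nat.ModEq] at h5
      rw [h5, Nat.mod_eq_of_lt (mem_range.mp hj)]
    · intro j hj
      show r' * (r' ^ (m.totient - 1) * j % m) % m = j
      have h2 : r' * (r' ^ (m.totient - 1) * j % m) ≡ r' * (r' ^ (m.totient - 1) * j) [MOD m] :=
        Nat.ModEq.mul_left _ (Nat.mod_modEq _ m)
      have h4 : r' * r' ^ (m.totient - 1) * j ≡ 1 * j [MOD m] := Nat.ModEq.mul_right j hs1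
      have h5 : r' * (r' ^ (m.totient - 1) * j % m) ≡ j [MOD m] := by
        calc r' * (r' ^ (m.totient - 1) * j % m) ≡ r' * (r' ^ (m.totient - 1) * j) [MOD m] := h2
        _ = r' * r' ^ (m.totient - 1) * j := by ring
        _ ≡ 1 * j [MOD m] := h4
        _ = j := one_mul j
      rw [Nat.ModEq] at h5
      rw [h5, Nat.mod_eq_of_lt (mem_range.mp hj)]
  have hNm : a ^ E m = N := by
    calc a ^ E m = ∏ j ∈ range m, a ^ (q ^ r) ^ j := (prod_pow_eq_pow_sum _ _ _).symm
      _ = ∏ j ∈ range m, a ^ q ^ (d * (r' * j % m)) := by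
          refine prod_congr rfl fun j _ => ?_
          rw [← pow_mul, ← hrr', mul_assoc]
          exact hgmod _
      _ = ∏ j ∈ range m, a ^ q ^ (d * j) := hbij
      _ = ∏ j ∈ range m, a ^ (q ^ d) ^ j := prod_congr rfl fun j _ => by rw [pow_mul]
      _ = a ^ ∑ j ∈ range m, (q ^ d) ^ j := prod_pow_eq_pow_sum _ _ _
      _ = N := by rw [hN, hKsum]
  have hNne : N ≠ 0 := by rw [hN]; exact pow_ne_zero _ ha
  have hNinv : a⁻¹ ^ E m = N⁻¹ := by rw [inv_pow, hNm]
  -- power facts about N and x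
  have hNd : N ^ q ^ d = N := by
    have hK : (q ^ d - 1) * ((q ^ n - 1) / (q ^ d - 1)) = q ^ n - 1 := by
      rw [hKsum, geom_mul', ← pow_mul, hnm]
    have e1 : ∀ K : ℕ, (q ^ d - 1) * K = q ^ n - 1 → K * q ^ d = (q ^ n - 1) + K := by
      intro K hK0
      calc K * q ^ d = K * (q ^ d - 1 + 1) := by rw [Nat.sub_add_cancel (Nat.one_le_pow _ _ (by omega))]
        _ = (q ^ d - 1) * K + K := by ring
        _ = (q ^ n - 1) + K := by rw [hK0]
    rw [hN, ← pow_mul, e1 _ hK, pow_add, ha1, one_mul]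
  have hNfix : N ^ q ^ r = N := by
    have key : ∀ s : ℕ, N ^ q ^ (d * s) = N := by
      intro s
      induction s with
      | zero => simp
      | succ s ih => rw [Nat.mul_succ, pow_add, pow_mul, ih, hNd]
    rw [← hrr']; exact key r'
  have hmr : m * r = n * r' := by rw [← hrr', ← hnm]; ring
  have hxm : ∀ y : F, y ^ q ^ (m * r) = y := by
    intro y
    rw [hmr, pow_mul q n r', hbigpow]
  -- denominator nonzero
  have hden : N + (-1 : F) ^ (m - 1) ≠ 0 := by
    intro h
    apply hcond
    have hNeq : N = -(-1 : F) ^ (m - 1) := eq_neg_of_add_eq_zero_left h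
    rw [hNeq]
    have h2 : ((-1 : F)) ^ (m - 1 + (m - 1)) = 1 := Even.neg_one_pow ⟨m - 1, rfl⟩
    calc (-1 : F) ^ m * -(-1 : F) ^ (m - 1)
        = (-1 : F) ^ (m - 1 + 1) * -(-1 : F) ^ (m - 1) := by rw [show m - 1 + 1 = m by omega]
      _ = (-1 : F) ^ (m - 1 + (m - 1)) := by rw [pow_succ, pow_add]; ring
      _ = 1 := h2
  -- the scalar is fixed by Frobenius
  have hc : (N / (N + (-1 : F) ^ (m - 1))) ^ q ^ r = N / (N + (-1 : F) ^ (m - 1)) := by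
    rw [div_pow, hadd r, hNfix, pow_right_comm, hneg1 r]
  -- the common final algebra
  obtain ⟨e, he⟩ : ∃ e, m = e + 1 := ⟨m - 1, by omega⟩
  have hden' : N + (-1 : F) ^ e ≠ 0 := by
    have := hden; rwa [he, Nat.add_sub_cancel] at this
  have hfinal : ∀ y : F,
      N / (N + (-1 : F) ^ (m - 1)) * (y - (-1 : F) ^ m * (N⁻¹ * y)) = y := by
    intro y
    rw [he, Nat.add_sub_cancel, pow_succ]
    field_simp
    ring
  -- the two telescoping computations
  constructor
  · -- forward direction
    rw [mul_pow, hc, hpowsum r]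
    have hstep : ∀ i ∈ range m,
        ((-1 : F) ^ i * a⁻¹ ^ ((q ^ ((i + 1) * r) - 1) / (q ^ r - 1)) * x ^ q ^ (i * r)) ^ q ^ r
          = (-1 : F) ^ i * (a * a⁻¹ ^ E (i + 2)) * x ^ q ^ ((i + 1) * r) := by
      intro i _
      rw [hdiv i, mul_pow, mul_pow, pow_right_comm, hneg1 r, hA1 i, ← pow_mul,
        ← pow_add, show i * r + r = (i + 1) * r by ring]
    rw [sum_congr rfl hstep]
    have hTsum : (∑ i ∈ range m, (-1 : F) ^ i * (a * a⁻¹ ^ E (i + 2)) * x ^ q ^ ((i + 1) * r))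
        + a * ∑ i ∈ range m,
            (-1 : F) ^ i * a⁻¹ ^ ((q ^ ((i + 1) * r) - 1) / (q ^ r - 1)) * x ^ q ^ (i * r)
        = x - (-1 : F) ^ m * (N⁻¹ * x) := by
      rw [mul_sum, ← sum_add_distrib]
      have hterm : ∀ i ∈ range m,
          (-1 : F) ^ i * (a * a⁻¹ ^ E (i + 2)) * x ^ q ^ ((i + 1) * r)
            + a * ((-1 : F) ^ i * a⁻¹ ^ ((q ^ ((i + 1) * r) - 1) / (q ^ r - 1)) * x ^ q ^ (i * r))
          = (fun j => (-1 : F) ^ j * (a * a⁻¹ ^ E (j + 1)) * x ^ q ^ (j * r)) i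
            - (fun j => (-1 : F) ^ j * (a * a⁻¹ ^ E (j + 1)) * x ^ q ^ (j * r)) (i + 1) := by
        intro i _
        simp only [hdiv i]
        ring
      rw [sum_congr rfl hterm, Finset.sum_range_sub']
      have h0 : (-1 : F) ^ 0 * (a * a⁻¹ ^ E (0 + 1)) * x ^ q ^ (0 * r) = x := by
        rw [hE1]
        simp [mul_inv_cancel₀ ha]
      have hm' : (-1 : F) ^ m * (a * a⁻¹ ^ E (m + 1)) * x ^ q ^ (m * r)
          = (-1 : F) ^ m * (N⁻¹ * x) := by
        rw [hEsucc m, pow_add, hNinv, inv_pow, hxm a, hxm x]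
        field_simp
      rw [h0, hm']
    calc N / (N + (-1 : F) ^ (m - 1)) *
          ∑ i ∈ range m, (-1 : F) ^ i * (a * a⁻¹ ^ E (i + 2)) * x ^ q ^ ((i + 1) * r)
        + a * (N / (N + (-1 : F) ^ (m - 1)) *
          ∑ i ∈ range m,
            (-1 : F) ^ i * a⁻¹ ^ ((q ^ ((i + 1) * r) - 1) / (q ^ r - 1)) * x ^ q ^ (i * r))
        = N / (N + (-1 : F) ^ (m - 1)) *
          ((∑ i ∈ range m, (-1 : F) ^ i * (a * a⁻¹ ^ E (i + 2)) * x ^ q ^ ((i + 1) * r))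
            + a * ∑ i ∈ range m,
              (-1 : F) ^ i * a⁻¹ ^ ((q ^ ((i + 1) * r) - 1) / (q ^ r - 1)) * x ^ q ^ (i * r)) := by
          ring
      _ = N / (N + (-1 : F) ^ (m - 1)) * (x - (-1 : F) ^ m * (N⁻¹ * x)) := by rw [hTsum]
      _ = x := hfinal x
  · -- backward direction
    have hstep : ∀ i ∈ range m,
        (-1 : F) ^ i * a⁻¹ ^ ((q ^ ((i + 1) * r) - 1) / (q ^ r - 1))
            * (x ^ q ^ r + a * x) ^ q ^ (i * r)
          = (fun j => (-1 : F) ^ j * a⁻¹ ^ E j * x ^ q ^ (j * r)) i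
            - (fun j => (-1 : F) ^ j * a⁻¹ ^ E j * x ^ q ^ (j * r)) (i + 1) := by
      intro i _
      rw [hdiv i, hadd (i * r), mul_pow, ← pow_mul, ← pow_add,
        show r + i * r = (i + 1) * r by ring]
      have h2 := hA2 i
      simp only []
      calc (-1 : F) ^ i * a⁻¹ ^ E (i + 1) * (x ^ q ^ ((i + 1) * r) + a ^ q ^ (i * r) * x ^ q ^ (i * r))
          = (-1 : F) ^ i * (a⁻¹ ^ E (i + 1) * a ^ q ^ (i * r)) * x ^ q ^ (i * r)
            + (-1 : F) ^ i * a⁻¹ ^ E (i + 1) * x ^ q ^ ((i + 1) * r) := by ring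
        _ = (-1 : F) ^ i * a⁻¹ ^ E i * x ^ q ^ (i * r)
            - (-1 : F) ^ (i + 1) * a⁻¹ ^ E (i + 1) * x ^ q ^ ((i + 1) * r) := by
            rw [h2, pow_succ]; ring
    rw [sum_congr rfl hstep, Finset.sum_range_sub']
    have h0 : (-1 : F) ^ 0 * a⁻¹ ^ E 0 * x ^ q ^ (0 * r) = x := by
      rw [hE0]; simp
    have hm' : (-1 : F) ^ m * a⁻¹ ^ E m * x ^ q ^ (m * r) = (-1 : F) ^ m * (N⁻¹ * x) := by
      rw [hNinv, hxm x]; ring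
    rw [h0, hm']
    exact hfinal x
end

section
/- If gcd(n/d, r/d) = 1 with d = gcd(n,r), then 1 + q^d + q^{2d} + ... + q^{(n/d - 1)d} ≡ 1 + q^r + q^{2r} + ... + q^{(n/d - 1)r} (mod q^n - 1). -/
/-!
Put `x = q ^ d` in `ZMod (q ^ n - 1)`. Then `x ^ (n / d) = 1` and `q ^ (i * r) = x ^ (i * (r / d))`.
Since `r / d` is coprime to `n / d`, the map `i ↦ i * (r / d) mod n / d` permutes
`{0, …, n / d - 1}`, so both sums are the sum of `x ^ i` over one full period.
-/

open Finset

theorem Nat.Coprime.bijOn_mul_mod {k m : ℕ} (h : k.Coprime m) :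
    Set.BijOn (fun i ↦ i * k % m) (range m : Set ℕ) (range m) := by
  rcases m.eq_zero_or_pos with rfl | hm
  · simp
  have hmaps : Set.MapsTo (fun i ↦ i * k % m) (range m : Set ℕ) (range m) :=
    fun i _ ↦ mem_range.mpr (Nat.mod_lt _ hm)
  refine ((range m).finite_toSet.injOn_iff_bijOn_of_mapsTo hmaps).mp ?_
  intro i hi j hj hij
  exact (Nat.ModEq.cancel_right_of_coprime h.symm hij).eq_of_lt_of_lt
    (mem_range.mp hi) (mem_range.mp hj)

theorem Function.Periodic.sum_range_comp_mul {M : Type*} [AddCommMonoid M] {f : ℕ → M}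
    {k m : ℕ} (hf : f.Periodic m) (hk : k.Coprime m) :
    ∑ i ∈ range m, f (i * k) = ∑ i ∈ range m, f i :=
  have h := hk.bijOn_mul_mod
  sum_nbij _ (fun _ hi ↦ h.mapsTo hi) h.injOn h.surjOn fun _ _ ↦ (hf.map_mod_nat _).symm

theorem periodic_pow_of_pow_eq_one {M : Type*} [Monoid M] {x : M} {m : ℕ} (hx : x ^ m = 1) :
    Function.Periodic (x ^ ·) m := fun _ ↦ by
  simp only [pow_add, hx, mul_one]

theorem ZMod.natCast_pow_eq_one (q n : ℕ) (hq : q ≠ 0) : (q : ZMod (q ^ n - 1)) ^ n = 1 := by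
  simpa using (ZMod.natCast_eq_natCast_iff _ _ _).mpr
    (Nat.modEq_sub (Nat.one_le_pow n q (Nat.pos_of_ne_zero hq)))

theorem stmt_4_general (q n r : ℕ) (hq : 2 ≤ q)
    (d : ℕ) (hd : d = Nat.gcd n r) (hco : Nat.gcd (n / d) (r / d) = 1) :
    (∑ i ∈ Finset.range (n / d), q ^ (i * d)) ≡
      (∑ i ∈ Finset.range (n / d), q ^ (i * r)) [MOD q ^ n - 1] := by
  have hdn : d * (n / d) = n := Nat.mul_div_cancel' (hd ▸ Nat.gcd_dvd_left n r)
  have hdr : d * (r / d) = r := Nat.mul_div_cancel' (hd ▸ Nat.gcd_dvd_right n r)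
  set x := (q : ZMod (q ^ n - 1)) ^ d
  have hx : x ^ (n / d) = 1 := by
    rw [← pow_mul, hdn, ZMod.natCast_pow_eq_one q n (by omega)]
  have key := (periodic_pow_of_pow_eq_one hx).sum_range_comp_mul (Nat.Coprime.symm hco)
  rw [← ZMod.natCast_eq_natCast_iff]
  push_cast
  calc ∑ i ∈ range (n / d), (q : ZMod (q ^ n - 1)) ^ (i * d)
      = ∑ i ∈ range (n / d), x ^ i := by simp only [x, ← pow_mul, mul_comm]
    _ = ∑ i ∈ range (n / d), x ^ (i * (r / d)) := key.symm
    _ = ∑ i ∈ range (n / d), (q : ZMod (q ^ n - 1)) ^ (i * r) := by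
      simp only [x, ← pow_mul, mul_left_comm d, hdr]

/-- If `gcd(n/d, r/d) = 1` with `d = gcd(n,r)`, then
`1 + q^d + ⋯ + q^{(n/d-1)d} ≡ 1 + q^r + ⋯ + q^{(n/d-1)r} (mod q^n - 1)`. -/
theorem stmt_4 (q n r : ℕ) (hq : 2 ≤ q) (hn : 0 < n) (hr : 0 < r)
    (d : ℕ) (hd : d = Nat.gcd n r) (hco : Nat.gcd (n / d) (r / d) = 1) :
    (∑ i ∈ Finset.range (n / d), q ^ (i * d)) ≡
      (∑ i ∈ Finset.range (n / d), q ^ (i * r)) [MOD q ^ n - 1] :=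
  stmt_4_general q n r hq d hd hco
end

section
/- L_1(x) = x^q + a x is a permutation polynomial over F_{q^n} if and only if (-1)^n · N(a) ≠ 1, where N is the absolute norm from F_{q^n} to F_q. Under this condition, L_1^{-1}(x) = [N(a)/(N(a) + (-1)^{n-1})] · Σ_{i=0}^{n-1} (-1)^i a^{-(q^{i+1}-1)/(q-1)} x^{q^i}. -/
/-!
Write `φ x = x ^ q`, a ring endomorphism of `F` with `φ ^ n = 1`, and `L x = φ x + a x`. With the
partial norms `bᵢ = a⁻¹ φ(a⁻¹) ⋯ φⁱ(a⁻¹)`, the map `S x = ∑ (-1)ⁱ bᵢ φⁱ x` satisfies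
`L ∘ S = S ∘ L = (1 + (-1)ⁿ⁻¹ N(a)⁻¹) • id`, because both composites telescope. Hence `L` is
invertible, with the stated inverse, as soon as `(-1)ⁿ N(a) ≠ 1`. Conversely, if `(-1)ⁿ N(a) = 1`
then `N(-a) = 1`, and in the cyclic group `Fˣ` this makes `-a` a `(q - 1)`-th power `z ^ (q - 1)`
(Hilbert 90); then `z ≠ 0` is a root of `L`.
-/

open Finset

namespace RingHom

variable {K : Type*} [Field K] (φ : K →+* K)

def partialNorm (c : K) (m : ℕ) : K := ∏ j ∈ Finset.range m, (φ ^ j) c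

def linearBinomial (a x : K) : K := φ x + a * x

def binomialAdjugate (a : K) (m : ℕ) (x : K) : K :=
  ∑ i ∈ Finset.range m, (-1) ^ i * φ.partialNorm a⁻¹ (i + 1) * (φ ^ i) x

variable {φ}

lemma pow_succ_apply (j : ℕ) (x : K) : (φ ^ (j + 1)) x = (φ ^ j) (φ x) :=
  Function.iterate_succ_apply _ _ _

lemma pow_succ_apply' (j : ℕ) (x : K) : (φ ^ (j + 1)) x = φ ((φ ^ j) x) :=
  Function.iterate_succ_apply' _ _ _

lemma pow_apply_of_pow_eq_one {m : ℕ} (h : φ ^ m = 1) (x : K) : (φ ^ m) x = x := by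
  rw [h, coe_one, id_eq]

lemma pow_apply_eq_pow_pow {q : ℕ} (hφ : ∀ x, φ x = x ^ q) (i : ℕ) (x : K) :
    (φ ^ i) x = x ^ q ^ i := by
  rw [coe_pow, show ⇑φ = (· ^ q) from funext hφ, pow_iterate]

lemma partialNorm_one (c : K) : φ.partialNorm c 1 = c := by
  rw [partialNorm, prod_range_one, pow_zero, coe_one, id_eq]

lemma partialNorm_succ (c : K) (m : ℕ) :
    φ.partialNorm c (m + 1) = φ.partialNorm c m * (φ ^ m) c :=
  prod_range_succ _ _

lemma partialNorm_succ' (c : K) (m : ℕ) :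
    φ.partialNorm c (m + 1) = c * φ (φ.partialNorm c m) := by
  simp only [partialNorm, prod_range_succ', map_prod, pow_succ_apply', pow_zero, coe_one, id_eq]
  exact mul_comm _ _

lemma partialNorm_inv (c : K) (m : ℕ) : φ.partialNorm c⁻¹ m = (φ.partialNorm c m)⁻¹ := by
  simp only [partialNorm, map_inv₀, prod_inv_distrib]

lemma partialNorm_neg (c : K) (m : ℕ) :
    φ.partialNorm (-c) m = (-1) ^ m * φ.partialNorm c m := by
  simp only [partialNorm, map_neg, prod_neg, card_range]

lemma partialNorm_ne_zero {c : K} (hc : c ≠ 0) (m : ℕ) : φ.partialNorm c m ≠ 0 :=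
  prod_ne_zero_iff.mpr fun _ _ ↦ (map_ne_zero _).mpr hc

lemma map_partialNorm_of_pow_eq_one {m : ℕ} (h : φ ^ m = 1) {c : K} (hc : c ≠ 0) :
    φ (φ.partialNorm c m) = φ.partialNorm c m := by
  apply mul_left_cancel₀ hc
  rw [← partialNorm_succ', partialNorm_succ, pow_apply_of_pow_eq_one h, mul_comm]

lemma partialNorm_eq_pow {q : ℕ} (hφ : ∀ x, φ x = x ^ q) (hq : 2 ≤ q) (c : K) (m : ℕ) :
    φ.partialNorm c m = c ^ ((q ^ m - 1) / (q - 1)) := by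
  simp only [partialNorm, pow_apply_eq_pow_pow hφ, prod_pow_eq_pow_sum, Nat.geomSum_eq hq]

section Adjugate

variable {a : K}

lemma binomialAdjugate_one (x : K) : φ.binomialAdjugate a 1 x = a⁻¹ * x := by
  rw [binomialAdjugate, sum_range_one, partialNorm_one, pow_zero, pow_zero, one_mul, coe_one, id_eq]

lemma linearBinomial_mul_of_map_eq {c : K} (hc : φ c = c) (x : K) :
    φ.linearBinomial a (c * x) = c * φ.linearBinomial a x := by
  rw [linearBinomial, linearBinomial, map_mul, hc]
  ring

lemma linearBinomial_binomialAdjugate (ha : a ≠ 0) (m : ℕ) (x : K) :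
    φ.linearBinomial a (φ.binomialAdjugate a (m + 1) x) =
      x + (-1) ^ m * φ (φ.partialNorm a⁻¹ (m + 1)) * (φ ^ (m + 1)) x := by
  induction m with
  | zero =>
    rw [binomialAdjugate_one, linearBinomial, partialNorm_one, map_mul, pow_zero, pow_one, one_mul,
      ← mul_assoc, mul_inv_cancel₀ ha, one_mul, add_comm]
  | succ m ih =>
    have hcoef : a * φ.partialNorm a⁻¹ (m + 2) = φ (φ.partialNorm a⁻¹ (m + 1)) := by
      rw [partialNorm_succ', ← mul_assoc, mul_inv_cancel₀ ha, one_mul]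
    unfold linearBinomial binomialAdjugate at *
    rw [sum_range_succ, map_add, mul_add, add_add_add_comm, ih, map_mul, map_mul, map_pow, map_neg,
      map_one, pow_succ_apply' (m + 1)]
    linear_combination (-1) ^ (m + 1) * (φ ^ (m + 1)) x * hcoef

lemma binomialAdjugate_linearBinomial (ha : a ≠ 0) (m : ℕ) (x : K) :
    φ.binomialAdjugate a (m + 1) (φ.linearBinomial a x) =
      x + (-1) ^ m * φ.partialNorm a⁻¹ (m + 1) * (φ ^ (m + 1)) x := by
  induction m with
  | zero =>
    rw [binomialAdjugate_one, linearBinomial, partialNorm_one, pow_zero, pow_one, one_mul, mul_add,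
      ← mul_assoc, inv_mul_cancel₀ ha, one_mul, add_comm]
  | succ m ih =>
    have hcoef : φ.partialNorm a⁻¹ (m + 2) * (φ ^ (m + 1)) a = φ.partialNorm a⁻¹ (m + 1) := by
      rw [partialNorm_succ, mul_assoc, ← map_mul, inv_mul_cancel₀ ha, map_one, mul_one]
    unfold linearBinomial binomialAdjugate at *
    rw [sum_range_succ, ih, map_add, map_mul, ← pow_succ_apply]
    linear_combination (-1) ^ (m + 1) * (φ ^ (m + 1)) x * hcoef

variable {m : ℕ}

theorem linearBinomial_binomialAdjugate_of_pow_eq_one (hφ : φ ^ (m + 1) = 1) (ha : a ≠ 0)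
    (x : K) :
    φ.linearBinomial a (φ.binomialAdjugate a (m + 1) x) =
      (1 + (-1) ^ m * (φ.partialNorm a (m + 1))⁻¹) * x := by
  rw [linearBinomial_binomialAdjugate ha, map_partialNorm_of_pow_eq_one hφ (inv_ne_zero ha),
    pow_apply_of_pow_eq_one hφ, partialNorm_inv]
  ring

theorem binomialAdjugate_linearBinomial_of_pow_eq_one (hφ : φ ^ (m + 1) = 1) (ha : a ≠ 0)
    (x : K) :
    φ.binomialAdjugate a (m + 1) (φ.linearBinomial a x) =
      (1 + (-1) ^ m * (φ.partialNorm a (m + 1))⁻¹) * x := by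
  rw [binomialAdjugate_linearBinomial ha, pow_apply_of_pow_eq_one hφ, partialNorm_inv]
  ring

theorem leftInverse_linearBinomial (hφ : φ ^ (m + 1) = 1) (ha : a ≠ 0)
    (hN : φ.partialNorm a (m + 1) + (-1) ^ m ≠ 0) :
    Function.LeftInverse
      (fun x ↦ φ.partialNorm a (m + 1) / (φ.partialNorm a (m + 1) + (-1) ^ m) *
        φ.binomialAdjugate a (m + 1) x)
      (φ.linearBinomial a) := by
  intro x
  have hN0 := partialNorm_ne_zero (φ := φ) ha (m + 1)
  simp only [binomialAdjugate_linearBinomial_of_pow_eq_one hφ ha]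
  field_simp

theorem rightInverse_linearBinomial (hφ : φ ^ (m + 1) = 1) (ha : a ≠ 0)
    (hN : φ.partialNorm a (m + 1) + (-1) ^ m ≠ 0) :
    Function.RightInverse
      (fun x ↦ φ.partialNorm a (m + 1) / (φ.partialNorm a (m + 1) + (-1) ^ m) *
        φ.binomialAdjugate a (m + 1) x)
      (φ.linearBinomial a) := by
  intro x
  have hN0 := partialNorm_ne_zero (φ := φ) ha (m + 1)
  have hc : φ (φ.partialNorm a (m + 1) / (φ.partialNorm a (m + 1) + (-1) ^ m)) =
      φ.partialNorm a (m + 1) / (φ.partialNorm a (m + 1) + (-1) ^ m) := by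
    simp only [map_div₀, map_add, map_pow, map_neg, map_one, map_partialNorm_of_pow_eq_one hφ ha]
  simp only [linearBinomial_mul_of_map_eq hc, linearBinomial_binomialAdjugate_of_pow_eq_one hφ ha]
  field_simp

end Adjugate

end RingHom

lemma neg_one_pow_succ_mul_eq_one_iff {K : Type*} [Field K] (m : ℕ) (N : K) :
    (-1) ^ (m + 1) * N = 1 ↔ N + (-1) ^ m = 0 := by
  have hsq : ((-1 : K) ^ m) ^ 2 = 1 := by rw [← pow_mul, mul_comm, pow_mul, neg_one_sq, one_pow]
  constructor <;> intro h
  · linear_combination -(-1) ^ m * h - N * hsq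
  · linear_combination -(-1) ^ m * h + hsq

theorem IsCyclic.exists_pow_eq_of_pow_eq_one {G : Type*} [CommGroup G] [IsCyclic G] [Finite G]
    {d t : ℕ} (hG : Nat.card G = d * t) {x : G} (hx : x ^ t = 1) : ∃ y, y ^ d = x := by
  have hd : d ≠ 0 := by
    rintro rfl
    exact Nat.card_pos.ne' (hG.trans (zero_mul t))
  have hle : (powMonoidHom d : G →* G).range ≤ (powMonoidHom t).ker := by
    rintro _ ⟨y, rfl⟩
    simp [← pow_mul, ← hG, pow_card_eq_one']
  have hcard :
      Nat.card (powMonoidHom t : G →* G).ker ≤ Nat.card (powMonoidHom d : G →* G).range := by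
    rw [card_powMonoidHom_ker, card_powMonoidHom_range, hG, Nat.gcd_mul_left_left,
      Nat.gcd_mul_right_left, Nat.mul_div_cancel_left _ (Nat.pos_of_ne_zero hd)]
  exact (Subgroup.eq_of_le_of_card_ge hle hcard).ge hx

section FiniteField

variable {F : Type*} [Field F] [Fintype F]

lemma exists_ringHom_apply_eq_pow {q : ℕ} (hq : q ∣ Fintype.card F) :
    ∃ φ : F →+* F, ∀ x, φ x = x ^ q := by
  obtain ⟨p, _, n, hp, hcard⟩ := FiniteField.card' F
  obtain ⟨k, -, rfl⟩ := (Nat.dvd_prime_pow hp).1 (hcard ▸ hq)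
  have := Fact.mk hp
  exact ⟨iterateFrobenius F p k, iterateFrobenius_def p k⟩

theorem RingHom.not_injective_linearBinomial {φ : F →+* F} {q m : ℕ}
    (hF : Fintype.card F = q ^ (m + 1)) (hq : 2 ≤ q) (hφ : ∀ x, φ x = x ^ q) {a : F} (ha : a ≠ 0)
    (hN : (-1) ^ (m + 1) * φ.partialNorm a (m + 1) = 1) :
    ¬ Function.Injective (φ.linearBinomial a) := by
  have hcard : Nat.card Fˣ = (q - 1) * ((q ^ (m + 1) - 1) / (q - 1)) := by
    rw [Nat.card_units, Nat.card_eq_fintype_card, hF,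
      Nat.mul_div_cancel' (Nat.sub_one_dvd_pow_sub_one q _)]
  have hnorm : Units.mk0 (-a) (neg_ne_zero.mpr ha) ^ ((q ^ (m + 1) - 1) / (q - 1)) = 1 := by
    ext
    rw [Units.val_pow_eq_pow_val, Units.val_mk0, ← partialNorm_eq_pow hφ hq, partialNorm_neg, hN,
      Units.val_one]
  obtain ⟨z, hz⟩ := IsCyclic.exists_pow_eq_of_pow_eq_one hcard hnorm
  have hz' : (z : F) ^ (q - 1) = -a := by rw [← Units.val_pow_eq_pow_val, hz, Units.val_mk0]
  intro hinj
  refine z.ne_zero (hinj ?_)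
  rw [linearBinomial, linearBinomial, hφ, hφ, ← Nat.sub_add_cancel (by omega : 1 ≤ q), pow_succ,
    hz']
  ring

end FiniteField

theorem stmt_6_general (q n : ℕ) (F : Type*) [Field F] [Fintype F] (hF : Fintype.card F = q ^ n)
    (a : F) (ha : a ≠ 0) (N : F) (hN : N = a ^ ((q ^ n - 1) / (q - 1))) :
    (Function.Bijective (fun x : F => x ^ q + a * x) ↔ (-1 : F) ^ n * N ≠ 1) ∧
    ((-1 : F) ^ n * N ≠ 1 →
      ∀ x : F,
        (N / (N + (-1) ^ (n - 1)) *
            ∑ i ∈ Finset.range n,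
              (-1 : F) ^ i * a⁻¹ ^ ((q ^ (i + 1) - 1) / (q - 1)) * x ^ q ^ i) ^ q
          + a * (N / (N + (-1) ^ (n - 1)) *
            ∑ i ∈ Finset.range n,
              (-1 : F) ^ i * a⁻¹ ^ ((q ^ (i + 1) - 1) / (q - 1)) * x ^ q ^ i) = x ∧
        N / (N + (-1) ^ (n - 1)) *
            ∑ i ∈ Finset.range n,
              (-1 : F) ^ i * a⁻¹ ^ ((q ^ (i + 1) - 1) / (q - 1)) * (x ^ q + a * x) ^ q ^ i
          = x) := by
  have hcard := Fintype.one_lt_card (α := F)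
  have hn : n ≠ 0 := by rintro rfl; simp [hF] at hcard
  have hq : 2 ≤ q := (one_lt_pow_iff hn).1 (hF ▸ hcard)
  obtain ⟨φ, hφ⟩ := exists_ringHom_apply_eq_pow (hF ▸ dvd_pow_self q hn : q ∣ Fintype.card F)
  obtain ⟨m, rfl⟩ := Nat.exists_eq_add_one_of_ne_zero hn
  have hper : φ ^ (m + 1) = 1 :=
    RingHom.ext fun x ↦ by rw [RingHom.pow_apply_eq_pow_pow hφ, ← hF, FiniteField.pow_card]; rfl
  have hpow (i : ℕ) (x : F) : x ^ q ^ i = (φ ^ i) x := (RingHom.pow_apply_eq_pow_pow hφ i x).symm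
  have hnorm (c : F) (i : ℕ) : c ^ ((q ^ i - 1) / (q - 1)) = φ.partialNorm c i :=
    (RingHom.partialNorm_eq_pow hφ hq c i).symm
  subst hN
  simp only [hnorm, hpow, ← hφ, Nat.add_sub_cancel]
  rw [ne_eq, neg_one_pow_succ_mul_eq_one_iff]
  have hinv := RingHom.leftInverse_linearBinomial hper ha
  have hinv' := RingHom.rightInverse_linearBinomial hper ha
  refine ⟨⟨fun hbij hN ↦ ?_, fun hN ↦ ⟨(hinv hN).injective, (hinv' hN).surjective⟩⟩,
    fun hN x ↦ ⟨hinv' hN x, hinv hN x⟩⟩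
  exact RingHom.not_injective_linearBinomial hF hq hφ ha
    ((neg_one_pow_succ_mul_eq_one_iff m _).2 hN) hbij.injective

/-- `L_1(x) = x^q + a x` permutes `F_{q^n}` iff `(-1)^n N(a) ≠ 1`, with `N(a) = a^{(q^n-1)/(q-1)}`;
and under this condition the compositional inverse is
`x ↦ [N(a)/(N(a)+(-1)^{n-1})] ∑_{i=0}^{n-1} (-1)^i a^{-(q^{i+1}-1)/(q-1)} x^{q^i}`. -/
theorem stmt_6 (q n : ℕ) (hq : IsPrimePow q) (hn : 0 < n)
    (F : Type*) [Field F] [Fintype F] (hF : Fintype.card F = q ^ n)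
    (a : F) (ha : a ≠ 0) (N : F) (hN : N = a ^ ((q ^ n - 1) / (q - 1))) :
    (Function.Bijective (fun x : F => x ^ q + a * x) ↔ (-1 : F) ^ n * N ≠ 1) ∧
    ((-1 : F) ^ n * N ≠ 1 →
      ∀ x : F,
        (N / (N + (-1) ^ (n - 1)) *
            ∑ i ∈ Finset.range n,
              (-1 : F) ^ i * a⁻¹ ^ ((q ^ (i + 1) - 1) / (q - 1)) * x ^ q ^ i) ^ q
          + a * (N / (N + (-1) ^ (n - 1)) *
            ∑ i ∈ Finset.range n,
              (-1 : F) ^ i * a⁻¹ ^ ((q ^ (i + 1) - 1) / (q - 1)) * x ^ q ^ i) = x ∧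
        N / (N + (-1) ^ (n - 1)) *
            ∑ i ∈ Finset.range n,
              (-1 : F) ^ i * a⁻¹ ^ ((q ^ (i + 1) - 1) / (q - 1)) * (x ^ q + a * x) ^ q ^ i
          = x) :=
  stmt_6_general q n F hF a ha N hN
end

section
/- Let n be even. Then L_{n/2}(x) = x^{q^{n/2}} + a x is a permutation polynomial of F_{q^n} if and only if a^{q^{n/2}+1} ≠ 1, and in that case its compositional inverse is L_{n/2}^{-1}(x) = (a^{q^{n/2}+1} - 1)^{-1} · (a^{q^{n/2}} x − x^{q^{n/2}}). -/
/-- For even `n`, `L_{n/2}(x) = x^{q^{n/2}} + a x` permutes `F_{q^n}` iff `a^{q^{n/2}+1} ≠ 1`,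
and in that case its compositional inverse is
`x ↦ (a^{q^{n/2}+1} - 1)⁻¹ (a^{q^{n/2}} x − x^{q^{n/2}})`. -/
theorem stmt_8 (q n : ℕ) (hq : IsPrimePow q) (hn : 0 < n) (hev : Even n)
    (F : Type*) [Field F] [Fintype F] (hF : Fintype.card F = q ^ n) (a : F) :
    (Function.Bijective (fun x : F => x ^ q ^ (n / 2) + a * x) ↔
        a ^ (q ^ (n / 2) + 1) ≠ 1) ∧
    (a ^ (q ^ (n / 2) + 1) ≠ 1 →
      ∀ x : F,
        ((a ^ (q ^ (n / 2) + 1) - 1)⁻¹ * (a ^ q ^ (n / 2) * x - x ^ q ^ (n / 2))) ^ q ^ (n / 2)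
          + a * ((a ^ (q ^ (n / 2) + 1) - 1)⁻¹ * (a ^ q ^ (n / 2) * x - x ^ q ^ (n / 2))) = x ∧
        (a ^ (q ^ (n / 2) + 1) - 1)⁻¹ *
            (a ^ q ^ (n / 2) * (x ^ q ^ (n / 2) + a * x)
              - (x ^ q ^ (n / 2) + a * x) ^ q ^ (n / 2)) = x) := by
  obtain ⟨p, k, hp, hk, rfl⟩ := hq
  have hp' : p.Prime := hp.nat_prime
  haveI : Fact p.Prime := ⟨hp'⟩
  obtain ⟨t, htt⟩ := hev
  set m := (p ^ k) ^ (n / 2) with hm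
  have ht2 : n / 2 = t := by omega
  have hmm : m * m = (p ^ k) ^ n := by
    rw [hm, ht2, ← pow_add]; congr 1; omega
  have hm2 : 2 ≤ m := by
    calc 2 ≤ p := hp'.two_le
      _ ≤ p ^ k := Nat.le_self_pow (by omega) p
      _ = (p ^ k) ^ 1 := (pow_one _).symm
      _ ≤ (p ^ k) ^ (n / 2) := Nat.pow_le_pow_right (Nat.one_le_pow _ _ hp'.pos) (by omega)
  -- characteristic is p
  haveI hcharp : CharP F p := by
    haveI hr : CharP F (ringChar F) := ringChar.charP F
    have hrp : (ringChar F).Prime := CharP.char_is_prime F (ringChar F)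
    obtain ⟨s, -, hcs⟩ := FiniteField.card F (ringChar F)
    have hrep : ringChar F = p := by
      have hd : p ∣ (ringChar F) ^ (s : ℕ) := by
        rw [← hcs, hF]
        exact dvd_pow (dvd_pow_self p (by omega)) (by omega)
      exact ((Nat.prime_dvd_prime_iff_eq hp' hrp).mp (hp'.dvd_of_dvd_pow hd)).symm
    rwa [hrep] at hr
  haveI : ExpChar F p := ExpChar.prime hp'
  have hmp : m = p ^ (k * (n / 2)) := by rw [hm, pow_mul]
  have H1 : ∀ x : F, (x ^ m) ^ m = x := by
    intro x; rw [← pow_mul, hmm, ← hF, FiniteField.pow_card]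
  have H2 : ∀ x y : F, (x + y) ^ m = x ^ m + y ^ m := by
    intro x y; rw [hmp]; exact add_pow_char_pow ..
  have H4 : ∀ x y : F, (x - y) ^ m = x ^ m - y ^ m := by
    intro x y; rw [hmp]; exact sub_pow_char_pow ..
  -- the inverse statement
  have key : a ^ (m + 1) ≠ 1 →
      ∀ x : F,
        ((a ^ (m + 1) - 1)⁻¹ * (a ^ m * x - x ^ m)) ^ m
          + a * ((a ^ (m + 1) - 1)⁻¹ * (a ^ m * x - x ^ m)) = x ∧
        (a ^ (m + 1) - 1)⁻¹ * (a ^ m * (x ^ m + a * x) - (x ^ m + a * x) ^ m) = x := by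
    intro h x
    have hsucc : a ^ (m + 1) = a ^ m * a := pow_succ a m
    have hc : a ^ m * a - 1 ≠ 0 := by rw [← hsucc]; exact sub_ne_zero.mpr h
    have hb : (a ^ m) ^ m = a := H1 a
    have hcm : (a ^ m * a - 1) ^ m = a ^ m * a - 1 := by
      rw [H4, mul_pow, hb, one_pow, mul_comm]
    constructor
    · rw [hsucc, mul_pow, inv_pow, hcm, H4, mul_pow, hb, H1 x]
      field_simp
      ring
    · rw [hsucc, H2, mul_pow, H1 x]
      field_simp
      ring
  refine ⟨⟨fun hbij h1 => ?_, fun h => ?_⟩, key⟩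
  · -- bijective → a^(m+1) ≠ 1 (by contradiction, h1 : a^(m+1) = 1)
    have ha0 : a ≠ 0 := by
      intro h0; rw [h0, zero_pow (by omega : m + 1 ≠ 0)] at h1; exact one_ne_zero h1.symm
    have hna : (-a) ^ (m + 1) = 1 := by
      rcases hp'.eq_two_or_odd' with h2 | hodd
      · haveI : CharP F 2 := by rwa [h2] at hcharp
        rw [CharTwo.neg_eq, h1]
      · have hmodd : Odd m := by rw [hmp]; exact hodd.pow
        rw [neg_pow, Even.neg_one_pow (by simpa using hmodd.add_one), one_mul, h1]
    set u : Fˣ := Units.mk0 (-a) (neg_ne_zero.mpr ha0) with hu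
    have hu1 : u ^ (m + 1) = 1 := by
      rw [← Units.val_eq_one, Units.val_pow_eq_pow_val, hu, Units.val_mk0, hna]
    obtain ⟨g, hg⟩ := IsCyclic.exists_generator (α := Fˣ)
    obtain ⟨s, hs⟩ : u ∈ Submonoid.powers g := by
      rw [mem_powers_iff_mem_zpowers]; exact hg u
    replace hs : g ^ s = u := hs
    have hog : orderOf g = m * m - 1 := by
      rw [orderOf_eq_card_of_forall_mem_zpowers hg, Nat.card_units, Nat.card_eq_fintype_card, hF, ← hmm]
    have hfac : m * m - 1 = (m - 1) * (m + 1) := by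
      obtain ⟨d, hd⟩ : ∃ d, m = d + 2 := ⟨m - 2, by omega⟩
      rw [hd, show d + 2 - 1 = d + 1 from rfl]
      exact Nat.sub_eq_of_eq_add (by ring)
    have hdvd : (m - 1) * (m + 1) ∣ s * (m + 1) := by
      rw [← hfac, ← hog]
      apply orderOf_dvd_of_pow_eq_one
      rw [pow_mul, hs, hu1]
    obtain ⟨c, hc⟩ := hdvd
    have hdvd2 : (m - 1) ∣ s :=
      ⟨c, Nat.eq_of_mul_eq_mul_right (show 0 < m + 1 by omega) (by rw [hc]; ring)⟩
    obtain ⟨s', hs'⟩ := hdvd2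
    have hv : ((g ^ s' : Fˣ) : F) ^ (m - 1) = -a := by
      have hpow : (g ^ s') ^ (m - 1) = u := by
        rw [← pow_mul, mul_comm s' (m - 1), ← hs', hs]
      rw [← Units.val_pow_eq_pow_val, hpow, hu, Units.val_mk0]
    set x : F := ((g ^ s' : Fˣ) : F) with hx
    have hx0 : x ≠ 0 := Units.ne_zero _
    have hxm : x ^ m + a * x = 0 := by
      have hxx : x ^ m = -a * x := by
        calc x ^ m = x ^ (m - 1) * x := by rw [← pow_succ]; congr 1; omega
          _ = -a * x := by rw [hv]
      rw [hxx]; ring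
    have h0 : (fun x : F => x ^ m + a * x) x = (fun x : F => x ^ m + a * x) 0 := by
      simp only [hxm, zero_pow (show m ≠ 0 by omega), mul_zero, add_zero]
    exact hx0 (hbij.1 h0)
  · -- a^(m+1) ≠ 1 → bijective
    have hk2 := key h
    exact Function.bijective_iff_has_inverse.mpr
      ⟨fun y => (a ^ (m + 1) - 1)⁻¹ * (a ^ m * y - y ^ m),
       fun x => (hk2 x).2, fun x => (hk2 x).1⟩
end

section
/- Let gcd(r, n) = 1 and suppose (-1)^n a^{(q^n-1)/(q-1)} ≠ 1 in F_{q^n}. Then, viewing a as an element of F_{q^{rn}}, also (-1)^n a^{(q^{rn}-1)/(q^r-1)} ≠ 1; consequently x ↦ x^{q^r} + a x is a bijection of F_{q^{rn}}. -/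
/-!
Write `N_s = (q^{sn} - 1)/(q^s - 1) = ∑_{i<n} q^{si}`. Modulo `q^n - 1` the powers of `q` are
periodic with period `n`, and `i ↦ ri` permutes `ℤ/n` when `gcd(r, n) = 1`, so
`N_r ≡ N_1 (mod q^n - 1)`; hence `a^{N_r} = a^{N_1}` in `F_{q^n}`, which gives the first claim.
The map `x ↦ x^{q^r} + a x` is additive, so it suffices that it has no nonzero root `z`. Such a
root satisfies `z^{q^r - 1} = -a`, hence `(-a)^{N_r} = z^{q^{rn} - 1} = 1`; since `q^{ri}` is a
power of the characteristic, `(-1)^{N_r} = (-1)^n`, contradicting the first claim.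
-/

open Finset Function

lemma Function.Periodic.sum_range_comp_mul_s9 {M : Type*} [AddCommMonoid M] {g : ℕ → M} {n r : ℕ}
    (hg : Periodic g n) (hco : r.Coprime n) :
    ∑ i ∈ range n, g (r * i) = ∑ i ∈ range n, g i := by
  rcases n with _ | n
  · simp
  let u : (ZMod (n + 1))ˣ := ZMod.unitOfCoprime r hco
  -- `ZMod (n + 1)` is `Fin (n + 1)`, so both sums are sums over `ZMod (n + 1)`.
  simp only [← Fin.sum_univ_eq_sum_range]
  refine Fintype.sum_bijective ((u : ZMod (n + 1)) * ·) (Units.mulLeft_bijective u) _ _ fun i => ?_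
  change g (r * (i : ZMod (n + 1)).val) = g ((r : ZMod (n + 1)) * i).val
  rw [ZMod.val_mul, ZMod.val_natCast, Nat.mod_mul_mod, hg.map_mod_nat]

lemma Nat.geomSum_mul_sub_one (Q n : ℕ) : (∑ i ∈ range n, Q ^ i) * (Q - 1) = Q ^ n - 1 := by
  rcases Q with _ | Q
  · cases n <;> simp
  · have := geom_sum_mul_add Q n
    simp only [Nat.add_sub_cancel]
    omega

lemma Nat.geomSum_pow_modEq_of_coprime {q : ℕ} (hq : q ≠ 0) {n r : ℕ} (hco : r.Coprime n) :
    ∑ i ∈ range n, (q ^ r) ^ i ≡ ∑ i ∈ range n, q ^ i [MOD q ^ n - 1] := by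
  have hqn : (q : ZMod (q ^ n - 1)) ^ n = 1 := by
    have := ZMod.natCast_self (q ^ n - 1)
    rwa [Nat.cast_sub (Nat.one_le_pow _ _ (Nat.pos_of_ne_zero hq)), sub_eq_zero,
      Nat.cast_pow, Nat.cast_one] at this
  rw [← ZMod.natCast_eq_natCast_iff]
  push_cast
  simp only [← pow_mul]
  exact Periodic.sum_range_comp_mul_s9 (fun i => by rw [pow_add, hqn, mul_one]) hco

lemma FiniteField.pow_eq_pow_of_modEq {K : Type*} [Field K] [Fintype K] (a : K) {e f : ℕ}
    (he : e ≠ 0) (hf : f ≠ 0) (h : e ≡ f [MOD Fintype.card K - 1]) : a ^ e = a ^ f := by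
  rcases eq_or_ne a 0 with rfl | ha
  · rw [zero_pow he, zero_pow hf]
  · have hmod : e % orderOf a = f % orderOf a :=
      h.of_dvd (orderOf_dvd_of_pow_eq_one (FiniteField.pow_card_sub_one_eq_one a ha))
    rw [← pow_mod_orderOf, hmod, pow_mod_orderOf]

lemma neg_one_pow_geomSum_expChar_pow {R : Type*} [CommRing R] (p : ℕ) [ExpChar R p] (k n : ℕ) :
    (-1 : R) ^ ∑ i ∈ range n, (p ^ k) ^ i = (-1) ^ n := by
  simp_rw [← prod_pow_eq_pow_sum, ← pow_mul, neg_one_pow_expChar_pow, prod_const, card_range]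

lemma FiniteField.neg_pow_geomSum_eq_one_of_pow_add_mul_eq_zero {L : Type*} [Field L]
    [Fintype L] {Q n : ℕ} (hQ : Q ≠ 0) (hL : Fintype.card L = Q ^ n) {b z : L} (hz : z ≠ 0)
    (h : z ^ Q + b * z = 0) :
    (-b) ^ ∑ i ∈ range n, Q ^ i = 1 := by
  have hzQ : z ^ (Q - 1) = -b := by
    refine mul_right_cancel₀ hz ?_
    rw [← pow_succ, Nat.sub_add_cancel (Nat.one_le_iff_ne_zero.2 hQ)]
    linear_combination h
  rw [← hzQ, ← pow_mul, mul_comm, Nat.geomSum_mul_sub_one, ← hL,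
    FiniteField.pow_card_sub_one_eq_one z hz]

theorem FiniteField.bijective_pow_add_mul {L : Type*} [Field L] [Fintype L] (p : ℕ) [ExpChar L p]
    {k n : ℕ} (hL : Fintype.card L = (p ^ k) ^ n) {b : L}
    (hb : (-1) ^ n * b ^ ∑ i ∈ range n, (p ^ k) ^ i ≠ 1) :
    Bijective fun x : L => x ^ p ^ k + b * x := by
  let f : L →+ L := (iterateFrobenius L p k).toAddMonoidHom + AddMonoidHom.mulLeft b
  change Bijective f
  rw [← Finite.injective_iff_bijective, injective_iff_map_eq_zero]
  intro z hz
  by_contra hz0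
  refine hb ?_
  rw [← neg_one_pow_geomSum_expChar_pow p k n, ← mul_pow, neg_one_mul]
  exact FiniteField.neg_pow_geomSum_eq_one_of_pow_add_mul_eq_zero (expChar_pow_pos L p k).ne' hL
    hz0 hz

/-- If `gcd(r,n) = 1` and `(-1)^n a^{(q^n-1)/(q-1)} ≠ 1` in `F_{q^n}`, then viewing `a` in
`F_{q^{rn}}` one also has `(-1)^n a^{(q^{rn}-1)/(q^r-1)} ≠ 1`; consequently
`x ↦ x^{q^r} + a x` is a bijection of `F_{q^{rn}}`. -/
theorem stmt_9 (q n r : ℕ) (hq : IsPrimePow q) (hn : 0 < n) (hr : 0 < r)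
    (hco : Nat.gcd r n = 1)
    (K L : Type*) [Field K] [Field L] [Fintype K] [Fintype L] [Algebra K L]
    (hK : Fintype.card K = q ^ n) (hL : Fintype.card L = q ^ (r * n))
    (a : K) (hcond : (-1 : K) ^ n * a ^ ((q ^ n - 1) / (q - 1)) ≠ 1) :
    (-1 : L) ^ n * (algebraMap K L a) ^ ((q ^ (r * n) - 1) / (q ^ r - 1)) ≠ 1 ∧
    Function.Bijective (fun x : L => x ^ q ^ r + algebraMap K L a * x) := by
  obtain ⟨p, k, hp, hk, rfl⟩ := hq
  have : Fact p.Prime := ⟨hp.nat_prime⟩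
  have : CharP L p := charP_of_card_eq_prime_pow (hL.trans (pow_mul p k _).symm)
  have hq2 : 2 ≤ p ^ k := hp.nat_prime.two_le.trans (Nat.le_self_pow hk.ne' p)
  have hqr2 : 2 ≤ (p ^ k) ^ r := hq2.trans (Nat.le_self_pow hr.ne' _)
  rw [← Nat.geomSum_eq hq2] at hcond
  rw [pow_mul, ← Nat.geomSum_eq hqr2]
  have hsum_ne_zero (Q : ℕ) : ∑ i ∈ range n, Q ^ i ≠ 0 :=
    mt sum_eq_zero_iff.1 fun h => by simpa using h 0 (mem_range.2 hn)
  have ha : a ^ ∑ i ∈ range n, ((p ^ k) ^ r) ^ i = a ^ ∑ i ∈ range n, (p ^ k) ^ i :=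
    FiniteField.pow_eq_pow_of_modEq a (hsum_ne_zero _) (hsum_ne_zero _)
      (hK ▸ Nat.geomSum_pow_modEq_of_coprime (by positivity) hco)
  have hcondL := (algebraMap K L).injective.ne (ha ▸ hcond)
  simp only [map_mul, map_pow, map_neg, map_one] at hcondL
  refine ⟨hcondL, ?_⟩
  rw [← pow_mul] at hcondL ⊢
  exact FiniteField.bijective_pow_add_mul p (hL.trans (by ring)) hcondL
end

section
/- If gcd(r,n) = 1 and a ∈ F_{q^n}^*, then (-a)^{(q^{rn}-1)/(q^r-1)} = (-1)^n a^{(q^n-1)/(q-1)}, where the left side is computed in F_{q^{rn}} ⊇ F_{q^n}. -/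
/-!
Write `N = ∑_{j<n} q^{rj}` and `M = ∑_{i<n} q^i` for the two exponents. Since `|K| = q^n`,
`x ^ q ^ m` only depends on `m mod n`, and `j ↦ rj mod n` permutes `{0, …, n-1}`, so
`x ^ N = ∏_j x ^ q ^ (rj) = ∏_i x ^ q ^ i = x ^ M` for every `x ∈ K`. Applied to `x = -a` this
leaves `(-a) ^ M = ∏_i (-a) ^ q ^ i = (-1)^n a ^ M`, because `(-1) ^ q ^ i = -1` in `K`: either
`q` is odd, or `q` divides `|K|` and `K` has characteristic two.
-/

open Finset

theorem Finset.prod_range_mul_mod_of_coprime {M : Type*} [CommMonoid M] {r n : ℕ}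
    (hco : r.Coprime n) (f : ℕ → M) :
    ∏ j ∈ range n, f (r * j % n) = ∏ i ∈ range n, f i := by
  have hinj : Set.InjOn (fun j => r * j % n) (range n) := by
    intro x hx y hy h
    have hxy : x ≡ y [MOD n] := Nat.ModEq.cancel_left_of_coprime (Nat.coprime_comm.mp hco) h
    rw [coe_range, Set.mem_Iio] at hx hy
    rwa [Nat.ModEq, Nat.mod_eq_of_lt hx, Nat.mod_eq_of_lt hy] at hxy
  have himage : (range n).image (fun j => r * j % n) = range n := by
    refine eq_of_subset_of_card_le (fun i hi => ?_) (card_image_of_injOn hinj).ge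
    obtain ⟨j, hj, rfl⟩ := mem_image.mp hi
    exact mem_range.mpr (Nat.mod_lt _ (pos_of_ne_zero fun hn => by simp [hn] at hj))
  rw [← prod_image (f := f) hinj, himage]

namespace FiniteField

variable {K : Type*} [Field K] [Fintype K] {q n : ℕ}

theorem pow_pow_eq_pow_pow_mod (hK : Fintype.card K = q ^ n) (x : K) (m : ℕ) :
    x ^ q ^ m = x ^ q ^ (m % n) := by
  conv_lhs => rw [← Nat.div_add_mod m n, pow_add, pow_mul, pow_mul, ← hK, pow_card_pow]

theorem neg_one_pow_pow_of_dvd_card (hq : q ∣ Fintype.card K) (i : ℕ) :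
    (-1 : K) ^ q ^ i = -1 := by
  rcases Nat.even_or_odd q with hq_even | hq_odd
  · have hchar : ringChar K = 2 :=
      even_card_iff_char_two.mpr (Nat.mod_eq_zero_of_dvd (hq_even.two_dvd.trans hq))
    rw [neg_one_eq_one_iff.mpr hchar, one_pow]
  · exact (hq_odd.pow).neg_one_pow

theorem pow_geom_sum_pow_mul_eq_pow_geom_sum (hK : Fintype.card K = q ^ n) {r : ℕ}
    (hco : r.Coprime n) (x : K) :
    x ^ (∑ j ∈ range n, q ^ (r * j)) = x ^ (∑ i ∈ range n, q ^ i) := by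
  simp only [← prod_pow_eq_pow_sum]
  rw [← prod_range_mul_mod_of_coprime hco (fun i => x ^ q ^ i)]
  exact prod_congr rfl fun j _ => pow_pow_eq_pow_pow_mod hK x (r * j)

theorem neg_pow_geom_sum (hK : Fintype.card K = q ^ n) (x : K) :
    (-x) ^ (∑ i ∈ range n, q ^ i) = (-1) ^ n * x ^ (∑ i ∈ range n, q ^ i) := by
  have hq : q ∣ Fintype.card K := by
    rcases n with _ | n
    · simp [Fintype.one_lt_card.ne'] at hK
    · exact hK ▸ dvd_pow_self q n.succ_ne_zero
  calc (-x) ^ (∑ i ∈ range n, q ^ i) = ∏ i ∈ range n, (-1) * x ^ q ^ i := by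
        rw [← prod_pow_eq_pow_sum]
        exact prod_congr rfl fun i _ => by rw [neg_pow, neg_one_pow_pow_of_dvd_card hq]
    _ = (-1) ^ n * x ^ (∑ i ∈ range n, q ^ i) := by
        rw [prod_mul_distrib, prod_const, card_range, prod_pow_eq_pow_sum]

end FiniteField

theorem stmt_10_general (q n r : ℕ) (hr : 0 < r)
    (hco : Nat.gcd r n = 1)
    (K L : Type*) [Field K] [Field L] [Fintype K] [Algebra K L]
    (hK : Fintype.card K = q ^ n)
    (a : K) :
    (-(algebraMap K L a)) ^ ((q ^ (r * n) - 1) / (q ^ r - 1)) =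
      algebraMap K L ((-1) ^ n * a ^ ((q ^ n - 1) / (q - 1))) := by
  have hq : 1 < q :=
    lt_of_pow_lt_pow_left₀ n q.zero_le (by simpa [hK] using Fintype.one_lt_card (α := K))
  have hN : (q ^ (r * n) - 1) / (q ^ r - 1) = ∑ j ∈ range n, q ^ (r * j) := by
    simp only [pow_mul, ← Nat.geomSum_eq (Nat.one_lt_pow hr.ne' hq)]
  rw [hN, ← Nat.geomSum_eq hq, ← map_neg, ← map_pow,
    FiniteField.pow_geom_sum_pow_mul_eq_pow_geom_sum hK hco, FiniteField.neg_pow_geom_sum hK]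

/-- If `gcd(r,n) = 1` and `a ∈ F_{q^n}^*`, then
`(-a)^{(q^{rn}-1)/(q^r-1)} = (-1)^n a^{(q^n-1)/(q-1)}`, the left side computed in
`F_{q^{rn}} ⊇ F_{q^n}`. -/
theorem stmt_10 (q n r : ℕ) (hq : IsPrimePow q) (hn : 0 < n) (hr : 0 < r)
    (hco : Nat.gcd r n = 1)
    (K L : Type*) [Field K] [Field L] [Fintype K] [Fintype L] [Algebra K L]
    (hK : Fintype.card K = q ^ n) (hL : Fintype.card L = q ^ (r * n))
    (a : K) (ha : a ≠ 0) :
    (-(algebraMap K L a)) ^ ((q ^ (r * n) - 1) / (q ^ r - 1)) =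
      algebraMap K L ((-1) ^ n * a ^ ((q ^ n - 1) / (q - 1))) :=
  stmt_10_general q n r hr hco K L hK a
end

section
/- Let gcd(t, n) = 1 and set q̄ = q^t. If L(x) = Σ_{i=0}^{n-1} a_i x^{q^i} with a_i ∈ F_{q^n} induces a permutation of F_{q^n}, then L̄(x) = Σ_{i=0}^{n-1} a_{ti mod n} x^{q̄^i} induces a permutation of F_{q̄^n} = F_{q^{nt}}. -/
/-!
A primitive `(q^t - 1)`-th root of unity `ζ` of `F_{q^{nt}}` is fixed by `x ↦ x^{q^t}`, and the
degree `d` of `F_{q^n}(ζ)` over `F_{q^n}` satisfies `q^t - 1 ∣ q^{nd} - 1`, so `t ∣ nd`, hence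
`t ∣ d` as `gcd(t, n) = 1`: thus `ζ` generates `F_{q^{nt}}` over `F_{q^n}` and its powers form a
basis of elements `b` with `b^{q^t} = b`. For such `b` and `r ∈ F_{q^n}` we get
`L̄(r b) = L(r) b`, because `r^{q^{ti}} = r^{q^{ti mod n}}` and `i ↦ ti mod n` permutes the
residues mod `n`. So the additive map `L̄` acts as `L` on each coordinate in this basis.
-/

open Finset

def qPolynomialMap {R : Type*} [Semiring R] (Q n : ℕ) (c : ℕ → R) (x : R) : R :=
  ∑ i ∈ range n, c i * x ^ Q ^ i

theorem Nat.dvd_of_pow_sub_one_dvd_pow_sub_one {q a b : ℕ} (hq : 1 < q)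
    (h : q ^ a - 1 ∣ q ^ b - 1) : a ∣ b := by
  have hgcd : q ^ Nat.gcd a b - 1 = q ^ a - 1 := by
    rw [← Nat.pow_sub_one_gcd_pow_sub_one, Nat.gcd_eq_left h]
  have := Nat.one_le_pow (Nat.gcd a b) q (by omega)
  have := Nat.one_le_pow a q (by omega)
  exact Nat.gcd_eq_left_iff_dvd.mp (Nat.pow_right_injective hq (show q ^ _ = q ^ _ by omega))

theorem Finset.sum_range_mul_mod {M : Type*} [AddCommMonoid M] {t n : ℕ} (h : t.Coprime n)
    (f : ℕ → M) : ∑ i ∈ range n, f (t * i % n) = ∑ i ∈ range n, f i := by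
  have hmaps : Set.MapsTo (fun i => t * i % n) (range n) (range n) := fun i hi =>
    mem_range.mpr (Nat.mod_lt _ (by simp at hi; omega))
  have hinj : Set.InjOn (fun i => t * i % n) (range n) := fun i hi j hj hij => by
    simp only [coe_range, Set.mem_Iio] at hi hj
    simpa [Nat.ModEq, Nat.mod_eq_of_lt hi, Nat.mod_eq_of_lt hj] using
      Nat.ModEq.cancel_left_of_coprime h.symm hij
  exact sum_nbij _ hmaps hinj (surjOn_of_injOn_of_card_le _ hmaps hinj le_rfl) fun _ _ => rfl

theorem FiniteField.pow_pow_eq_pow_pow_mod_s13 {K : Type*} [Field K] [Fintype K] {q n : ℕ}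
    (hK : Fintype.card K = q ^ n) (c : K) (m : ℕ) : c ^ q ^ m = c ^ q ^ (m % n) := by
  conv_lhs => rw [← Nat.div_add_mod m n, pow_add, pow_mul, pow_mul, pow_right_comm, ← hK,
    FiniteField.pow_card_pow]

theorem pow_pow_eq_self_of_pow_eq_self {M : Type*} [Monoid M] {Q : ℕ} {v : M} (hv : v ^ Q = v)
    (i : ℕ) : v ^ Q ^ i = v := by
  induction i with
  | zero => simp
  | succ i ih => rw [pow_succ, pow_mul, ih, hv]

theorem qPolynomialMap_add {R : Type*} [CommRing R] {p : ℕ} [ExpChar R p] (k n : ℕ)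
    (c : ℕ → R) (x y : R) :
    qPolynomialMap (p ^ k) n c (x + y) =
      qPolynomialMap (p ^ k) n c x + qPolynomialMap (p ^ k) n c y := by
  simp only [qPolynomialMap, ← sum_add_distrib, ← pow_mul, add_pow_expChar_pow, mul_add]

theorem Module.Basis.bijective_of_map_smul {R M ι : Type*} [Semiring R] [AddCommMonoid M]
    [Module R M] [Fintype ι] (b : Basis ι R M) (f : M →+ M) {g : R → R}
    (hg : Function.Bijective g) (hf : ∀ i r, f (r • b i) = g r • b i) :
    Function.Bijective f := by
  have hconj : ⇑f = b.equivFun.symm ∘ Pi.map (fun _ => g) ∘ b.equivFun := by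
    funext x
    conv_lhs => rw [← b.sum_equivFun x]
    simp only [map_sum, hf, Function.comp_apply, Pi.map_apply, b.equivFun_symm_apply]
  rw [hconj]
  exact b.equivFun.symm.bijective.comp
    ((Function.Bijective.piMap fun _ => hg).comp b.equivFun.bijective)

theorem qPolynomialMap_smul_of_pow_eq_self {K E : Type*} [Field K] [Fintype K] [CommSemiring E]
    [Algebra K E] {q n t : ℕ} (hK : Fintype.card K = q ^ n) (hco : t.Coprime n) (a : ℕ → K)
    {v : E} (hv : v ^ q ^ t = v) (r : K) :
    qPolynomialMap (q ^ t) n (fun i => algebraMap K E (a (t * i % n))) (r • v)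
      = qPolynomialMap q n a r • v := by
  have hterm : ∀ i, algebraMap K E (a (t * i % n)) * (r • v) ^ (q ^ t) ^ i
      = algebraMap K E (a (t * i % n) * r ^ q ^ (t * i % n)) * v := fun i => by
    rw [Algebra.smul_def, mul_pow, pow_pow_eq_self_of_pow_eq_self hv, ← pow_mul,
      ← FiniteField.pow_pow_eq_pow_pow_mod_s13 hK, map_mul, map_pow, mul_assoc]
  rw [qPolynomialMap, sum_congr rfl fun i _ => hterm i, ← sum_mul, ← map_sum,
    sum_range_mul_mod hco fun j => a j * r ^ q ^ j, Algebra.smul_def, qPolynomialMap]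

theorem FiniteField.exists_isPrimitiveRoot_of_dvd_card_sub_one {E : Type*} [Field E] [Fintype E]
    {d : ℕ} (hd : d ∣ Fintype.card E - 1) : ∃ ζ : E, IsPrimitiveRoot ζ d := by
  classical
  rw [← Fintype.card_units] at hd
  obtain ⟨g, hg⟩ := IsCyclic.exists_ofOrder_eq_natCard (α := Eˣ)
  have hgen : IsPrimitiveRoot g (Fintype.card Eˣ) := by
    rw [← Nat.card_eq_fintype_card, ← hg]
    exact IsPrimitiveRoot.orderOf g
  have hcof : Fintype.card Eˣ / d ≠ 0 := (Nat.div_pos (Nat.le_of_dvd Fintype.card_pos hd)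
    (Nat.pos_of_dvd_of_pos hd Fintype.card_pos)).ne'
  refine ⟨(g ^ (Fintype.card Eˣ / d) : Eˣ), IsPrimitiveRoot.coe_units_iff.mpr ?_⟩
  simpa [Nat.div_div_self hd Fintype.card_ne_zero] using
    hgen.pow_of_dvd hcof (Nat.div_dvd_of_dvd hd)

theorem FiniteField.adjoin_simple_eq_top_of_isPrimitiveRoot {K E : Type*} [Field K] [Field E]
    [Fintype K] [Fintype E] [Algebra K E] {q n t : ℕ} (hq : 1 < q) (hco : t.Coprime n)
    (hK : Fintype.card K = q ^ n) (hE : Fintype.card E = q ^ (n * t)) {ζ : E}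
    (hζ : IsPrimitiveRoot ζ (q ^ t - 1)) : IntermediateField.adjoin K {ζ} = ⊤ := by
  classical
  have hn : n ≠ 0 := by
    rintro rfl
    simpa [hK] using Fintype.one_lt_card (α := K)
  have ht : t ≠ 0 := by
    rintro rfl
    simpa [hE] using Fintype.one_lt_card (α := E)
  set S := IntermediateField.adjoin K {ζ}
  have hdS : t ∣ Module.finrank K S := by
    have hcardS : Fintype.card S = q ^ (n * Module.finrank K S) := by
      rw [Module.card_eq_pow_finrank (K := K), hK, pow_mul]
    have hζS :
        (⟨ζ, IntermediateField.mem_adjoin_simple_self K ζ⟩ : S) ^ (Fintype.card S - 1) = 1 :=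
      FiniteField.pow_card_sub_one_eq_one _ fun h =>
        hζ.ne_zero (Nat.sub_ne_zero_of_lt (Nat.one_lt_pow ht hq)) (congrArg Subtype.val h)
    have hdvd := hζ.dvd_of_pow_eq_one _ (congrArg Subtype.val hζS)
    rw [hcardS] at hdvd
    exact hco.dvd_of_dvd_mul_left (Nat.dvd_of_pow_sub_one_dvd_pow_sub_one hq hdvd)
  have hdE : Module.finrank K E = t := by
    rw [Module.card_eq_pow_finrank (K := K), hK, ← pow_mul] at hE
    exact Nat.eq_of_mul_eq_mul_left (Nat.pos_of_ne_zero hn) (Nat.pow_right_injective hq hE)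
  refine IntermediateField.eq_of_le_of_finrank_eq le_top ?_
  rw [IntermediateField.finrank_top', hdE]
  exact Nat.dvd_antisymm (hdE ▸ Module.finrank_dvd_finrank_right K S E) hdS

theorem FiniteField.exists_powerBasis_gen_pow_eq_self {K E : Type*} [Field K] [Field E]
    [Fintype K] [Fintype E] [Algebra K E] {q n t : ℕ} (hq : 1 < q) (hco : t.Coprime n)
    (hK : Fintype.card K = q ^ n) (hE : Fintype.card E = q ^ (n * t)) :
    ∃ pb : PowerBasis K E, pb.gen ^ q ^ t = pb.gen := by
  obtain ⟨ζ, hζ⟩ : ∃ ζ : E, IsPrimitiveRoot ζ (q ^ t - 1) := by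
    refine FiniteField.exists_isPrimitiveRoot_of_dvd_card_sub_one ?_
    rw [hE]
    exact Nat.pow_sub_one_dvd_pow_sub_one q (Dvd.intro_left n rfl)
  have hadjoin := FiniteField.adjoin_simple_eq_top_of_isPrimitiveRoot hq hco hK hE hζ
  rw [IntermediateField.adjoin_simple_eq_top_iff_of_isAlgebraic
    (Algebra.IsAlgebraic.isAlgebraic ζ)] at hadjoin
  refine ⟨PowerBasis.ofAdjoinEqTop (Algebra.IsIntegral.isIntegral ζ) hadjoin, ?_⟩
  rw [PowerBasis.ofAdjoinEqTop_gen, ← Nat.sub_add_cancel (Nat.one_le_pow t q (by omega)),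
    pow_succ, hζ.pow_eq_one, one_mul]

theorem stmt_13_general (q n t : ℕ) (hq : IsPrimePow q)
    (hco : Nat.gcd t n = 1)
    (K E : Type*) [Field K] [Field E] [Fintype K] [Fintype E] [Algebra K E]
    (hK : Fintype.card K = q ^ n) (hE : Fintype.card E = q ^ (n * t))
    (a : ℕ → K)
    (hL : Function.Bijective (fun x : K => ∑ i ∈ Finset.range n, a i * x ^ q ^ i)) :
    Function.Bijective
      (fun x : E => ∑ i ∈ Finset.range n, algebraMap K E (a (t * i % n)) * x ^ (q ^ t) ^ i) := by
  obtain ⟨pb, hgen⟩ := FiniteField.exists_powerBasis_gen_pow_eq_self hq.one_lt hco hK hE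
  obtain ⟨p, k, hp, -, rfl⟩ := hq
  have : Fact p.Prime := ⟨hp.nat_prime⟩
  have : CharP E p :=
    charP_of_card_eq_prime_pow (f := k * (n * t)) (by rw [hE, ← pow_mul])
  let Lbar : E →+ E :=
    AddMonoidHom.mk' (qPolynomialMap ((p ^ k) ^ t) n fun i => algebraMap K E (a (t * i % n)))
      fun x y => by rw [← pow_mul]; exact qPolynomialMap_add _ _ _ x y
  exact pb.basis.bijective_of_map_smul Lbar (g := qPolynomialMap (p ^ k) n a) hL fun i r => by
    refine qPolynomialMap_smul_of_pow_eq_self hK hco a ?_ r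
    rw [pb.coe_basis, ← pow_mul, mul_comm, pow_mul, hgen]

/-- Let `gcd(t,n) = 1` and `q̄ = q^t`. If `L(x) = ∑_{i<n} a_i x^{q^i}` permutes `F_{q^n}`,
then `L̄(x) = ∑_{i<n} a_{ti mod n} x^{q̄^i}` permutes `F_{q̄^n} = F_{q^{nt}}`. -/
theorem stmt_13 (q n t : ℕ) (hq : IsPrimePow q) (hn : 0 < n) (ht : 0 < t)
    (hco : Nat.gcd t n = 1)
    (K E : Type*) [Field K] [Field E] [Fintype K] [Fintype E] [Algebra K E]
    (hK : Fintype.card K = q ^ n) (hE : Fintype.card E = q ^ (n * t))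
    (a : ℕ → K)
    (hL : Function.Bijective (fun x : K => ∑ i ∈ Finset.range n, a i * x ^ q ^ i)) :
    Function.Bijective
      (fun x : E => ∑ i ∈ Finset.range n, algebraMap K E (a (t * i % n)) * x ^ (q ^ t) ^ i) :=
  stmt_13_general q n t hq hco K E hK hE a hL
end

section
/- If L(x) = Σ a_i x^{q^i} is a linearized permutation polynomial over F_{q^n} with compositional inverse L^{-1}(x) = Σ b_i x^{q^i}, then the Dickson matrix of L^{-1} is the matrix inverse of the Dickson matrix of L: D_{L^{-1}} = D_L^{-1}. -/
open Finset Polynomial Matrix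

/-!
The Dickson matrix `D_L` sends `v(x) = (x, x^q, …, x^{q^(n-1)})` to `v(L x)`, since `x ↦ x^{q^i}`
is additive on `F` and `x^{q^n} = x`. Hence `D_{L⁻¹} D_L v(x) = v(x)` for all `x ∈ F`. The vectors
`v(x)` span `F^n`: a row killing all of them is the coefficient vector of a `q`-polynomial of
degree `< q^n = |F|` vanishing on `F`, hence zero. So `D_{L⁻¹} D_L = 1`.
-/

section

variable {F : Type*} [Field F] [Fintype F] {q n : ℕ}

namespace FiniteField

theorem ne_zero_of_card_eq_pow (hF : Fintype.card F = q ^ n) : n ≠ 0 := by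
  rintro rfl
  exact (Fintype.one_lt_card (α := F)).ne' (by simpa using hF)

theorem one_lt_of_card_eq_pow (hF : Fintype.card F = q ^ n) : 1 < q :=
  (one_lt_pow_iff (ne_zero_of_card_eq_pow hF)).1 (hF ▸ Fintype.one_lt_card)

theorem exists_eq_ringExpChar_pow (hF : Fintype.card F = q ^ n) :
    ∃ k, q = ringExpChar F ^ k := by
  obtain ⟨m, hp, hcard⟩ := FiniteField.card F (ringChar F)
  have : ExpChar F (ringChar F) := ExpChar.prime hp
  rw [ringExpChar.eq F (ringChar F)]
  obtain ⟨k, -, hk⟩ := (Nat.dvd_prime_pow hp).1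
    (hcard ▸ hF ▸ dvd_pow_self q (ne_zero_of_card_eq_pow hF))
  exact ⟨k, hk⟩

theorem sum_pow_pow_of_card_eq_pow {ι : Type*} (hF : Fintype.card F = q ^ n) (s : Finset ι)
    (f : ι → F) (i : ℕ) : (∑ j ∈ s, f j) ^ q ^ i = ∑ j ∈ s, f j ^ q ^ i := by
  obtain ⟨k, rfl⟩ := exists_eq_ringExpChar_pow hF
  simp only [← pow_mul, sum_pow_char_pow]

theorem pow_pow_mod_of_card_eq_pow (hF : Fintype.card F = q ^ n) (x : F) (s : ℕ) :
    x ^ q ^ s = x ^ q ^ (s % n) := by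
  conv_lhs => rw [← Nat.div_add_mod s n, pow_add, pow_mul, pow_mul, ← hF, pow_card_pow]

theorem eq_zero_of_forall_sum_mul_pow_pow_eq_zero (hq : 1 < q)
    (hcard : q ^ n ≤ Fintype.card F) {c : Fin n → F}
    (h : ∀ x : F, ∑ j, c j * x ^ q ^ (j : ℕ) = 0) : c = 0 := by
  set P : F[X] := ∑ j, C (c j) * X ^ q ^ (j : ℕ) with hP
  have hdeg : P.natDegree < Fintype.card F := by
    refine lt_of_le_of_lt (natDegree_sum_le_of_forall_le _ _ (n := q ^ n - 1) fun j _ => ?_) ?_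
    · refine (natDegree_C_mul_X_pow_le _ _).trans ?_
      have := Nat.pow_lt_pow_right hq j.isLt
      omega
    · have := Nat.one_le_pow n q (by omega)
      omega
  have hP0 : P = 0 := eq_zero_of_natDegree_lt_card_of_eval_eq_zero P Function.injective_id
    (fun x => by simpa [hP, eval_finsetSum] using h x) hdeg
  funext k
  have := congr_arg (coeff · (q ^ (k : ℕ))) hP0
  simpa [hP, finsetSum_coeff, coeff_C_mul, coeff_X_pow, (Nat.pow_right_injective hq).eq_iff,
    Fin.val_inj] using this

end FiniteField

variable (q n) in
def qLinearized (a : ℕ → F) (x : F) : F := ∑ i ∈ range n, a i * x ^ q ^ i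

variable (q n) in
def dicksonMatrix (a : ℕ → F) : Matrix (Fin n) (Fin n) F :=
  of fun i j : Fin n => a ((n + (j : ℕ) - (i : ℕ)) % n) ^ q ^ (i : ℕ)

variable (q n) in
def frobeniusVector (x : F) : Fin n → F := fun j => x ^ q ^ (j : ℕ)

theorem Fin.val_sub_eq_add_sub_mod (i j : Fin n) : ((j - i : Fin n) : ℕ) = (n + j - i) % n := by
  rw [Fin.val_sub, Nat.sub_add_comm i.isLt.le]

theorem dicksonMatrix_mulVec_frobeniusVector (hF : Fintype.card F = q ^ n) (a : ℕ → F) (x : F) :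
    dicksonMatrix q n a *ᵥ frobeniusVector q n x = frobeniusVector q n (qLinearized q n a x) := by
  have : NeZero n := ⟨FiniteField.ne_zero_of_card_eq_pow hF⟩
  ext i
  calc (dicksonMatrix q n a *ᵥ frobeniusVector q n x) i
      = ∑ m : Fin n, a m ^ q ^ (i : ℕ) * x ^ q ^ ((i + m : Fin n) : ℕ) := by
        simp only [mulVec, dotProduct, dicksonMatrix, frobeniusVector, of_apply,
          ← Fin.val_sub_eq_add_sub_mod]
        rw [← Equiv.sum_comp (Equiv.addLeft i)]
        simp
    _ = ∑ m ∈ range n, (a m * x ^ q ^ m) ^ q ^ (i : ℕ) := by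
        rw [Finset.sum_range]
        refine Fintype.sum_congr _ _ fun m => ?_
        rw [mul_pow, ← pow_mul, ← pow_add, Fin.val_add,
          ← FiniteField.pow_pow_mod_of_card_eq_pow hF, add_comm]
    _ = (qLinearized q n a x) ^ q ^ (i : ℕ) :=
        (FiniteField.sum_pow_pow_of_card_eq_pow hF _ _ _).symm

theorem Matrix.eq_of_forall_mulVec_frobeniusVector_eq {m : Type*} (hq : 1 < q)
    (hcard : q ^ n ≤ Fintype.card F) {M N : Matrix m (Fin n) F}
    (h : ∀ x : F, M *ᵥ frobeniusVector q n x = N *ᵥ frobeniusVector q n x) : M = N := by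
  ext i j
  have hrow : M i - N i = 0 := FiniteField.eq_zero_of_forall_sum_mul_pow_pow_eq_zero hq hcard
    fun x => by
      simpa [mulVec, dotProduct, frobeniusVector, sub_mul, sub_eq_zero] using congr_fun (h x) i
  exact sub_eq_zero.1 (congr_fun hrow j)

theorem dicksonMatrix_mul_eq_one_of_leftInverse (hF : Fintype.card F = q ^ n) {a b : ℕ → F}
    (h : ∀ x, qLinearized q n b (qLinearized q n a x) = x) :
    dicksonMatrix q n b * dicksonMatrix q n a = 1 := by
  refine Matrix.eq_of_forall_mulVec_frobeniusVector_eq (FiniteField.one_lt_of_card_eq_pow hF)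
    hF.ge fun x => ?_
  rw [← mulVec_mulVec, dicksonMatrix_mulVec_frobeniusVector hF,
    dicksonMatrix_mulVec_frobeniusVector hF, h, one_mulVec]

end

theorem stmt_16_general (q n : ℕ)
    (F : Type*) [Field F] [Fintype F] (hF : Fintype.card F = q ^ n) (a b : ℕ → F)
    (hinv : ∀ x : F,
      (∑ i ∈ Finset.range n, b i * (∑ j ∈ Finset.range n, a j * x ^ q ^ j) ^ q ^ i) = x ∧
      (∑ i ∈ Finset.range n, a i * (∑ j ∈ Finset.range n, b j * x ^ q ^ j) ^ q ^ i) = x) :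
    (Matrix.of fun i j : Fin n => (b ((n + (j : ℕ) - (i : ℕ)) % n)) ^ q ^ (i : ℕ)) =
      (Matrix.of fun i j : Fin n => (a ((n + (j : ℕ) - (i : ℕ)) % n)) ^ q ^ (i : ℕ))⁻¹ :=
  (Matrix.inv_eq_left_inv (dicksonMatrix_mul_eq_one_of_leftInverse hF fun x => (hinv x).1)).symm

/-- If `L(x) = ∑ a_i x^{q^i}` is a linearized permutation polynomial over `F_{q^n}` with
compositional inverse `L⁻¹(x) = ∑ b_i x^{q^i}`, then `D_{L⁻¹} = D_L⁻¹`. -/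
theorem stmt_16 (q n : ℕ) (hq : IsPrimePow q) (hn : 0 < n)
    (F : Type*) [Field F] [Fintype F] (hF : Fintype.card F = q ^ n) (a b : ℕ → F)
    (hbij : Function.Bijective (fun x : F => ∑ i ∈ Finset.range n, a i * x ^ q ^ i))
    (hinv : ∀ x : F,
      (∑ i ∈ Finset.range n, b i * (∑ j ∈ Finset.range n, a j * x ^ q ^ j) ^ q ^ i) = x ∧
      (∑ i ∈ Finset.range n, a i * (∑ j ∈ Finset.range n, b j * x ^ q ^ j) ^ q ^ i) = x) :
    (Matrix.of fun i j : Fin n => (b ((n + (j : ℕ) - (i : ℕ)) % n)) ^ q ^ (i : ℕ)) =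
      (Matrix.of fun i j : Fin n => (a ((n + (j : ℕ) - (i : ℕ)) % n)) ^ q ^ (i : ℕ))⁻¹ :=
  stmt_16_general q n F hF a b hinv
end

section
/- For the Dickson matrix D of L_1(x) = x^q + a x over F_{q^n}, the (i,0)-cofactor equals (-1)^i N(a) a^{-(q^{i+1}-1)/(q-1)} for 0 ≤ i ≤ n-2, and the (n-1,0)-cofactor equals (-1)^{n-1}, where N(a) = a^{(q^n-1)/(q-1)} and a ≠ 0. -/
/-- For the Dickson matrix `D` of `L_1(x) = x^q + a x` over `F_{q^n}` (here `n = m + 1 ≥ 2`),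
the `(i,0)`-cofactor equals `(-1)^i N(a) a^{-(q^{i+1}-1)/(q-1)}` for `0 ≤ i ≤ n-2`, and the
`(n-1,0)`-cofactor equals `(-1)^{n-1}`, where `N(a) = a^{(q^n-1)/(q-1)}` and `a ≠ 0`. -/
theorem stmt_18 (q m : ℕ) (hq : IsPrimePow q) (hm : 1 ≤ m)
    (F : Type*) [Field F] [Fintype F] (hF : Fintype.card F = q ^ (m + 1))
    (a : F) (ha : a ≠ 0)
    (D : Matrix (Fin (m + 1)) (Fin (m + 1)) F)
    (hD : D = Matrix.of fun i j : Fin (m + 1) =>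
        if j = i then a ^ q ^ (i : ℕ)
        else if (j : ℕ) = (i : ℕ) + 1 then 1
        else if (i : ℕ) = m ∧ (j : ℕ) = 0 then 1
        else 0) :
    (∀ i : Fin (m + 1), (i : ℕ) ≤ m - 1 →
        (-1 : F) ^ ((i : ℕ) + 0) * (D.submatrix i.succAbove Fin.succ).det =
          (-1) ^ (i : ℕ) * a ^ ((q ^ (m + 1) - 1) / (q - 1)) *
            a⁻¹ ^ ((q ^ ((i : ℕ) + 1) - 1) / (q - 1))) ∧
    (∀ i : Fin (m + 1), (i : ℕ) = m →
        (-1 : F) ^ ((i : ℕ) + 0) * (D.submatrix i.succAbove Fin.succ).det = (-1) ^ m) := by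
  have hq2 : 2 ≤ q := hq.two_le
  -- entry formula for D
  have hDval : ∀ x y : Fin (m + 1), (y : ℕ) ≠ 0 →
      D x y = if (y : ℕ) = (x : ℕ) then a ^ q ^ (x : ℕ)
        else if (y : ℕ) = (x : ℕ) + 1 then 1 else 0 := by
    intro x y hy
    rw [hD]
    simp only [Matrix.of_apply, Fin.ext_iff]
    split_ifs with h1 h2 h3 <;> first | rfl | omega
  have hR : ∀ (i : Fin (m+1)) (r : Fin m),
      ((i.succAbove r : Fin (m+1)) : ℕ) = if (r:ℕ) < (i:ℕ) then (r:ℕ) else (r:ℕ)+1 := by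
    intro i r
    rw [Fin.succAbove]
    split_ifs with h1 h2 h2 <;>
      simp_all [Fin.lt_def, Fin.coe_castSucc, Fin.val_succ] <;> omega
  constructor
  · intro i hi
    have hk : (i : ℕ) < m := by omega
    -- the reversing involution on the first k indices
    set f : Fin m → Fin m := fun r =>
      if h : (r:ℕ) < (i:ℕ) then ⟨(i:ℕ) - 1 - (r:ℕ), by omega⟩ else r with hf
    have hfc : ∀ r : Fin m, ((f r : Fin m) : ℕ) = if (r:ℕ) < (i:ℕ) then (i:ℕ) - 1 - (r:ℕ) else (r:ℕ) := by
      intro r; rw [hf]; split_ifs with h <;> simp [h]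
    have hinv : Function.Involutive f := by
      intro r
      have h1 := hfc r
      by_cases h : (r:ℕ) < (i:ℕ)
      · have h2 : ((f r : Fin m) : ℕ) = (i:ℕ) - 1 - (r:ℕ) := by rw [h1, if_pos h]
        have h3 : ((f r : Fin m) : ℕ) < (i:ℕ) := by omega
        have h4 := hfc (f r)
        rw [if_pos h3, h2] at h4
        apply Fin.ext; omega
      · have h2 : ((f r : Fin m) : ℕ) = (r:ℕ) := by rw [h1, if_neg h]
        have h3 : ¬ ((f r : Fin m) : ℕ) < (i:ℕ) := by omega
        have h4 := hfc (f r)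
        rw [if_neg h3, h2] at h4
        apply Fin.ext; omega
    set ρ : Equiv.Perm (Fin m) := hinv.toPerm with hρ
    have hρc : ∀ r, ρ r = f r := fun _ => rfl
    set M : Matrix (Fin m) (Fin m) F := D.submatrix i.succAbove Fin.succ with hM
    have hdet : M.det = (M.submatrix ρ ρ).det := (Matrix.det_submatrix_equiv_self ρ M).symm
    have htri : (M.submatrix ρ ρ).BlockTriangular id := by
      intro r c hlt
      have hlt' : (c : ℕ) < (r : ℕ) := hlt
      simp only [Matrix.submatrix_apply, hρc, hM]
      have hy : ((Fin.succ (f c) : Fin (m+1)) : ℕ) = ((f c : Fin m) : ℕ) + 1 := rfl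
      rw [hDval _ _ (by omega)]
      have hx := hR i (f r)
      have hfr := hfc r
      have hfcc := hfc c
      split_ifs with h1 h2
      · exfalso; rw [hy] at h1; split_ifs at hx hfr hfcc <;> omega
      · exfalso; rw [hy] at h2; split_ifs at hx hfr hfcc <;> omega
      · rfl
    have hdiag : ∀ r : Fin m, M (f r) (f r) = if (r:ℕ) < (i:ℕ) then (1:F) else a ^ q ^ ((r:ℕ)+1) := by
      intro r
      simp only [hM, Matrix.submatrix_apply]
      have hy : ((Fin.succ (f r) : Fin (m+1)) : ℕ) = ((f r : Fin m) : ℕ) + 1 := rfl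
      rw [hDval _ _ (by omega)]
      have hx := hR i (f r)
      have hfr := hfc r
      by_cases hrk : (r:ℕ) < (i:ℕ)
      · rw [if_pos hrk] at hfr ⊢
        have hfrk : ((f r : Fin m) : ℕ) < (i:ℕ) := by omega
        rw [if_pos hfrk] at hx
        rw [if_neg (by omega), if_pos (by omega)]
      · rw [if_neg hrk] at hfr ⊢
        have hfrk : ¬ ((f r : Fin m) : ℕ) < (i:ℕ) := by omega
        rw [if_neg hfrk] at hx
        rw [if_pos (by omega), hx, hfr]
    have hdet2 : M.det = ∏ r : Fin m, M (f r) (f r) := by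
      rw [hdet, Matrix.det_of_upperTriangular htri]
      exact Finset.prod_congr rfl fun r _ => rfl
    have hdet3 : M.det = a ^ (∑ j ∈ Finset.Ico ((i:ℕ)+1) (m+1), q ^ j) := by
      rw [hdet2]
      have : ∀ r : Fin m, M (f r) (f r)
          = (fun t : ℕ => if t < (i:ℕ) then (1:F) else a ^ q ^ (t+1)) (r : ℕ) := fun r => hdiag r
      rw [Finset.prod_congr rfl fun r _ => this r,
        Fin.prod_univ_eq_prod_range (fun t : ℕ => if t < (i:ℕ) then (1:F) else a ^ q ^ (t+1)) m]
      rw [← Finset.prod_range_mul_prod_Ico _ (le_of_lt hk)]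
      rw [Finset.prod_eq_one (fun x hx => if_pos (Finset.mem_range.mp hx)), one_mul]
      have h2 : ∀ x ∈ Finset.Ico (i:ℕ) m, (if x < (i:ℕ) then (1:F) else a ^ q ^ (x+1)) = a ^ q ^ (x+1) := by
        intro x hx
        rw [if_neg (by simpa using (Finset.mem_Ico.mp hx).1.not_gt)]
      rw [Finset.prod_congr rfl h2, Finset.prod_pow_eq_pow_sum]
      congr 1
      rw [Finset.sum_Ico_eq_sum_range, Finset.sum_Ico_eq_sum_range]
      have : m - (i:ℕ) = m + 1 - ((i:ℕ) + 1) := by omega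
      rw [← this]
      exact Finset.sum_congr rfl fun x _ => by rw [show (i:ℕ) + x + 1 = (i:ℕ) + 1 + x by omega]
    rw [hdet3, add_zero]
    rw [← Nat.geomSum_eq hq2 (m+1), ← Nat.geomSum_eq hq2 ((i:ℕ)+1)]
    have hsplit : ∑ j ∈ Finset.range (m+1), q ^ j
        = (∑ j ∈ Finset.range ((i:ℕ)+1), q ^ j) + ∑ j ∈ Finset.Ico ((i:ℕ)+1) (m+1), q ^ j :=
      (Finset.sum_range_add_sum_Ico _ (by omega)).symm
    rw [hsplit, pow_add, inv_pow]
    field_simp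
  · intro i hi
    have hlast : i = Fin.last m := Fin.ext hi
    set M : Matrix (Fin m) (Fin m) F := D.submatrix i.succAbove Fin.succ with hM
    have htri : M.BlockTriangular OrderDual.toDual := by
      intro r c hlt
      have hlt' : (r : ℕ) < (c : ℕ) := hlt
      simp only [hM, Matrix.submatrix_apply]
      have hy : ((Fin.succ c : Fin (m+1)) : ℕ) = (c : ℕ) + 1 := rfl
      have hx : ((i.succAbove r : Fin (m+1)) : ℕ) = (r : ℕ) := by
        rw [hR]; rw [if_pos (by omega)]
      rw [hDval _ _ (by omega)]
      rw [if_neg (by omega), if_neg (by omega)]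
    have hdiag : ∀ r : Fin m, M r r = 1 := by
      intro r
      simp only [hM, Matrix.submatrix_apply]
      have hx : ((i.succAbove r : Fin (m+1)) : ℕ) = (r : ℕ) := by
        rw [hR]; rw [if_pos (by omega)]
      rw [hDval _ _ (by simp), if_neg (by simp [hx]), if_pos (by simp [hx])]
    rw [Matrix.det_of_lowerTriangular M htri]
    rw [Finset.prod_congr rfl fun r _ => hdiag r, Finset.prod_const_one, mul_one, hi, add_zero]
end

section
/- Suppose gcd(n,r) = d and (-1)^{n/d} a^{(q^n-1)/(q^d-1)} ≠ 1. Then for every y ∈ F_{q^n}, the unique x ∈ F_{q^n} with x^{q^r} + a x = y is x = [N(a)/(N(a)+(-1)^{n/d-1})] · Σ_{i=0}^{n/d-1} (-1)^i a^{-(q^{(i+1)r}-1)/(q^r-1)} y^{q^{ir}}, where N(a) = a^{(q^n-1)/(q^d-1)}. -/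
/-!
With `σ x = x ^ q ^ r`, the equation reads `σ x + a x = y`, and `σ^m = id` on `F` for
`m = n / d`. Writing `P j = iterateProd σ a j = a σ(a) ⋯ σ^{j-1}(a)`, which is
`a ^ ((q ^ (j r) - 1) / (q ^ r - 1))`, the relation `a σ(P j) = P (j + 1)` makes
`S = ∑_{i<m} (-1)^i (P (i+1))⁻¹ σ^i(y)` telescope: `σ S + a S = (1 - (-1)^m / P m) y`.
For `i < m`, the residues of `i r` and of `i d` modulo `n` are the same set, so `P m` is the norm
`N = a ^ ((q ^ n - 1) / (q ^ d - 1))`; it is fixed by `σ`, and rescaling `S` by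
`N / (N - (-1)^m)` gives a solution. A solution of `σ z + a z = 0` satisfies
`σ^m z = (-1)^m N z`, hence `z = 0`, which gives uniqueness.
-/

open Finset

section TwistedEquation

variable {K : Type*} [Field K] (σ : K →+* K) (a : K)

def iterateProd (j : ℕ) : K := ∏ i ∈ range j, σ^[i] a

lemma iterateProd_succ (j : ℕ) : iterateProd σ a (j + 1) = iterateProd σ a j * σ^[j] a :=
  prod_range_succ _ _

lemma iterateProd_succ' (j : ℕ) : iterateProd σ a (j + 1) = a * σ (iterateProd σ a j) := by
  simp only [iterateProd, prod_range_succ', map_prod, ← Function.iterate_succ_apply' σ,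
    Function.iterate_zero, id, mul_comm a]

variable {a}

lemma iterateProd_ne_zero (ha : a ≠ 0) (j : ℕ) : iterateProd σ a j ≠ 0 :=
  prod_ne_zero_iff.mpr fun i _ =>
    Function.iterate_fixed (map_zero σ) i ▸ (σ.injective.iterate i).ne ha

lemma iterate_eq_of_map_add_mul_eq_zero {z : K} (hz : σ z + a * z = 0) (j : ℕ) :
    σ^[j] z = (-1) ^ j * iterateProd σ a j * z := by
  induction j with
  | zero => simp [iterateProd]
  | succ j ih =>
    rw [Function.iterate_succ_apply', ih, iterateProd_succ', map_mul, map_mul,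
      eq_neg_of_add_eq_zero_left hz]
    simp only [map_pow, map_neg, map_one]
    ring

variable {m : ℕ} (hσ : ∀ x, σ^[m] x = x)
include hσ

lemma map_iterateProd_of_periodic (ha : a ≠ 0) : σ (iterateProd σ a m) = iterateProd σ a m := by
  have h := iterateProd_succ' σ a m
  rw [iterateProd_succ, hσ, mul_comm] at h
  exact (mul_left_cancel₀ ha h).symm

lemma map_add_mul_alternating_sum (ha : a ≠ 0) (y : K) :
    σ (∑ i ∈ range m, (-1) ^ i * (iterateProd σ a (i + 1))⁻¹ * σ^[i] y)
        + a * ∑ i ∈ range m, (-1) ^ i * (iterateProd σ a (i + 1))⁻¹ * σ^[i] y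
      = (1 - (-1) ^ m * (iterateProd σ a m)⁻¹) * y := by
  set g : ℕ → K := fun i => (-1) ^ i * a * (iterateProd σ a (i + 1))⁻¹ * σ^[i] y
  have hstep : ∀ i, σ ((-1) ^ i * (iterateProd σ a (i + 1))⁻¹ * σ^[i] y)
      + a * ((-1) ^ i * (iterateProd σ a (i + 1))⁻¹ * σ^[i] y) = g i - g (i + 1) := by
    intro i
    have hP : σ (iterateProd σ a (i + 1)) = a⁻¹ * iterateProd σ a (i + 2) := by
      rw [iterateProd_succ' σ a (i + 1), inv_mul_cancel_left₀ ha]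
    simp only [g, map_mul, map_pow, map_neg, map_one, map_inv₀, hP,
      ← Function.iterate_succ_apply' σ, mul_inv, inv_inv]
    ring
  have hg0 : g 0 = y := by
    simp [g, iterateProd, ha]
  have hgm : g m = (-1) ^ m * (iterateProd σ a m)⁻¹ * y := by
    simp only [g, iterateProd_succ, hσ, mul_inv]
    field_simp
  calc _ = ∑ i ∈ range m, (g i - g (i + 1)) := by
        rw [map_sum, mul_sum, ← sum_add_distrib]
        exact sum_congr rfl fun i _ => hstep i
    _ = _ := by rw [sum_range_sub', hg0, hgm]; ring

lemma eq_zero_of_map_add_mul_eq_zero (hN : (-1) ^ m * iterateProd σ a m ≠ 1) {z : K}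
    (hz : σ z + a * z = 0) : z = 0 := by
  have h := iterate_eq_of_map_add_mul_eq_zero σ hz m
  rw [hσ] at h
  by_contra hz0
  exact hN (mul_right_cancel₀ hz0 (by rw [one_mul, ← h]))

theorem map_add_mul_eq_iff (hm : 0 < m) (ha : a ≠ 0)
    (hN : (-1) ^ m * iterateProd σ a m ≠ 1) (x y : K) :
    σ x + a * x = y ↔
      x = iterateProd σ a m / (iterateProd σ a m + (-1) ^ (m - 1)) *
        ∑ i ∈ range m, (-1) ^ i * (iterateProd σ a (i + 1))⁻¹ * σ^[i] y := by
  obtain ⟨k, rfl⟩ : ∃ k, m = k + 1 := ⟨m - 1, by omega⟩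
  have hS := map_add_mul_alternating_sum σ hσ ha y
  have hσN := map_iterateProd_of_periodic σ hσ ha
  have hN0 : iterateProd σ a (k + 1) ≠ 0 := iterateProd_ne_zero σ ha _
  set N := iterateProd σ a (k + 1)
  set S := ∑ i ∈ range (k + 1), (-1) ^ i * (iterateProd σ a (i + 1))⁻¹ * σ^[i] y
  have hden : N + (-1) ^ k ≠ 0 := by
    intro h
    apply hN
    rw [eq_neg_of_add_eq_zero_left h]
    ring_nf
    simp
  have hσc : σ (N / (N + (-1) ^ k)) = N / (N + (-1) ^ k) := by
    simp only [map_div₀, map_add, map_pow, map_neg, map_one, hσN]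
  have hsol : σ (N / (N + (-1) ^ k) * S) + a * (N / (N + (-1) ^ k) * S) = y := calc
    _ = N / (N + (-1) ^ k) * (σ S + a * S) := by rw [map_mul, hσc]; ring
    _ = y := by rw [hS]; field_simp; ring
  simp only [Nat.add_sub_cancel]
  refine ⟨fun hx => ?_, fun hx => hx ▸ hsol⟩
  refine sub_eq_zero.mp (eq_zero_of_map_add_mul_eq_zero σ hσ hN ?_)
  rw [map_sub]
  linear_combination hx - hsol

end TwistedEquation

lemma prod_range_pow_pow {M : Type*} [CommMonoid M] (a : M) {b : ℕ} (hb : 2 ≤ b) (j : ℕ) :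
    ∏ i ∈ range j, a ^ b ^ i = a ^ ((b ^ j - 1) / (b - 1)) := by
  rw [prod_pow_eq_pow_sum, Nat.geomSum_eq hb]

lemma Function.Periodic.prod_range_mul_of_coprime {M : Type*} [CommMonoid M] {f : ℕ → M}
    {m k : ℕ} (hf : Function.Periodic f m) (hk : k.Coprime m) :
    ∏ i ∈ range m, f (i * k) = ∏ i ∈ range m, f i := by
  have hinj : Set.InjOn (fun i => i * k % m) (range m) := by
    intro i hi j hj hij
    have := Nat.ModEq.cancel_right_of_coprime (Nat.coprime_comm.mp hk) hij
    rwa [Nat.ModEq, Nat.mod_eq_of_lt (mem_range.mp hi), Nat.mod_eq_of_lt (mem_range.mp hj)] at this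
  have himage : (range m).image (fun i => i * k % m) = range m := by
    refine eq_of_subset_of_card_le (fun x hx => ?_) (card_image_of_injOn hinj).ge
    obtain ⟨i, hi, rfl⟩ := mem_image.mp hx
    exact mem_range.mpr (Nat.mod_lt _ (pos_of_ne_zero (by rintro rfl; simp at hi)))
  calc ∏ i ∈ range m, f (i * k) = ∏ i ∈ range m, f (i * k % m) := by
        simp only [hf.map_mod_nat]
    _ = ∏ i ∈ range m, f i := by rw [← prod_image hinj, himage]

lemma prod_range_pow_pow_gcd {M : Type*} [CommMonoid M] (a : M) {b n : ℕ} (ha : a ^ b ^ n = a)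
    (hn : 0 < n) (r : ℕ) :
    ∏ i ∈ range (n / n.gcd r), a ^ (b ^ r) ^ i
      = ∏ i ∈ range (n / n.gcd r), a ^ (b ^ n.gcd r) ^ i := by
  set d := n.gcd r
  have hd : 0 < d := Nat.gcd_pos_of_pos_left r hn
  have hperiodic : Function.Periodic (fun i => a ^ (b ^ d) ^ i) (n / d) := by
    intro i
    simp only
    rw [pow_add, ← pow_mul b d (n / d), Nat.mul_div_cancel' (Nat.gcd_dvd_left n r), mul_comm,
      pow_mul, ha]
  have hcop : (r / d).Coprime (n / d) := (Nat.coprime_div_gcd_div_gcd hd).symm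
  rw [← hperiodic.prod_range_mul_of_coprime hcop]
  refine prod_congr rfl fun i _ => ?_
  rw [mul_comm i, pow_mul, ← pow_mul b d, Nat.mul_div_cancel' (Nat.gcd_dvd_right n r)]

lemma exists_ringHom_eq_pow_pow {F : Type*} [Field F] [Fintype F] {q n : ℕ} (hq : IsPrimePow q)
    (hF : Fintype.card F = q ^ n) (s : ℕ) : ∃ σ : F →+* F, ∀ z, σ z = z ^ q ^ s := by
  obtain ⟨p, k, hp, -, rfl⟩ := hq
  have := Fact.mk (Nat.prime_iff.mpr hp)
  have : CharP F p := charP_of_card_eq_prime_pow (hF.trans (pow_mul p k n).symm)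
  exact ⟨iterateFrobenius F p (k * s), fun z => by rw [iterateFrobenius_def, pow_mul]⟩

section PowRingHom

variable {K : Type*} [Field K] {σ : K →+* K}

lemma iterate_eq_pow_pow {b : ℕ} (hσ : ∀ z, σ z = z ^ b) (i : ℕ) (z : K) :
    σ^[i] z = z ^ b ^ i := by
  rw [show ⇑σ = fun z => z ^ b from funext hσ, pow_iterate]

lemma iterateProd_eq_pow {b : ℕ} (hσ : ∀ z, σ z = z ^ b) (hb : 2 ≤ b) (a : K) (j : ℕ) :
    iterateProd σ a j = a ^ ((b ^ j - 1) / (b - 1)) := by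
  simp only [iterateProd, iterate_eq_pow_pow hσ, prod_range_pow_pow a hb]

variable [Fintype K] {q n r : ℕ} (hK : Fintype.card K = q ^ n) (hσ : ∀ z, σ z = z ^ q ^ r)
include hK hσ

lemma iterate_div_gcd_eq_self (z : K) : σ^[n / n.gcd r] z = z := by
  rw [iterate_eq_pow_pow hσ, ← pow_mul, ← Nat.mul_div_assoc _ (Nat.gcd_dvd_left n r), mul_comm,
    Nat.mul_div_assoc _ (Nat.gcd_dvd_right n r), pow_mul, ← hK, FiniteField.pow_card_pow]

lemma iterateProd_div_gcd_eq_pow (hq : 2 ≤ q) (hn : 0 < n) (a : K) :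
    iterateProd σ a (n / n.gcd r) = a ^ ((q ^ n - 1) / (q ^ n.gcd r - 1)) := by
  have hqd : 2 ≤ q ^ n.gcd r := hq.trans (Nat.le_self_pow (Nat.gcd_pos_of_pos_left r hn).ne' q)
  simp only [iterateProd, iterate_eq_pow_pow hσ]
  rw [prod_range_pow_pow_gcd a (hK ▸ FiniteField.pow_card a) hn, prod_range_pow_pow a hqd,
    ← pow_mul, Nat.mul_div_cancel' (Nat.gcd_dvd_left n r)]

end PowRingHom

theorem stmt_19_general (q n r : ℕ) (hq : IsPrimePow q) (hr : 1 ≤ r)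
    (d : ℕ) (hd : d = Nat.gcd n r)
    (F : Type*) [Field F] [Fintype F] (hF : Fintype.card F = q ^ n)
    (a : F) (ha : a ≠ 0) (N : F) (hN : N = a ^ ((q ^ n - 1) / (q ^ d - 1)))
    (hcond : (-1 : F) ^ (n / d) * N ≠ 1) :
    ∀ y : F,
      ((N / (N + (-1) ^ (n / d - 1)) *
            ∑ i ∈ Finset.range (n / d),
              (-1 : F) ^ i * a⁻¹ ^ ((q ^ ((i + 1) * r) - 1) / (q ^ r - 1)) * y ^ q ^ (i * r))
            ^ q ^ r
          + a * (N / (N + (-1) ^ (n / d - 1)) *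
            ∑ i ∈ Finset.range (n / d),
              (-1 : F) ^ i * a⁻¹ ^ ((q ^ ((i + 1) * r) - 1) / (q ^ r - 1)) * y ^ q ^ (i * r))
          = y) ∧
      ∀ x : F, x ^ q ^ r + a * x = y →
        x = N / (N + (-1) ^ (n / d - 1)) *
            ∑ i ∈ Finset.range (n / d),
              (-1 : F) ^ i * a⁻¹ ^ ((q ^ ((i + 1) * r) - 1) / (q ^ r - 1)) * y ^ q ^ (i * r) := by
  subst hd hN
  obtain ⟨σ, hσ⟩ := exists_ringHom_eq_pow_pow hq hF r
  have hn : 0 < n := Nat.pos_of_ne_zero fun h => by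
    simpa [hF, h] using Fintype.one_lt_card (α := F)
  have hm : 0 < n / n.gcd r :=
    Nat.div_pos (Nat.gcd_le_left r hn) (Nat.gcd_pos_of_pos_left r hn)
  have hqr : 2 ≤ q ^ r := hq.two_le.trans (Nat.le_self_pow (by omega) q)
  have hterm : ∀ y i, (-1 : F) ^ i * a⁻¹ ^ ((q ^ ((i + 1) * r) - 1) / (q ^ r - 1)) * y ^ q ^ (i * r)
      = (-1) ^ i * (iterateProd σ a (i + 1))⁻¹ * σ^[i] y := fun y i => by
    rw [iterateProd_eq_pow hσ hqr, iterate_eq_pow_pow hσ, inv_pow, pow_mul' q, pow_mul' q]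
  rw [← iterateProd_div_gcd_eq_pow hF hσ hq.two_le hn] at hcond ⊢
  intro y
  simp only [hterm, ← hσ]
  have key := map_add_mul_eq_iff σ (iterate_div_gcd_eq_self hF hσ) hm ha hcond
  exact ⟨(key _ y).2 rfl, fun x hx => (key x y).1 hx⟩

/-- Suppose `gcd(n,r) = d` and `(-1)^{n/d} a^{(q^n-1)/(q^d-1)} ≠ 1`. Then for every
`y ∈ F_{q^n}`, the unique `x` with `x^{q^r} + a x = y` is
`x = [N(a)/(N(a)+(-1)^{n/d-1})] ∑_{i=0}^{n/d-1} (-1)^i a^{-(q^{(i+1)r}-1)/(q^r-1)} y^{q^{ir}}`,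
where `N(a) = a^{(q^n-1)/(q^d-1)}`. -/
theorem stmt_19 (q n r : ℕ) (hq : IsPrimePow q) (hr : 1 ≤ r) (hrn : r ≤ n - 1)
    (d : ℕ) (hd : d = Nat.gcd n r)
    (F : Type*) [Field F] [Fintype F] (hF : Fintype.card F = q ^ n)
    (a : F) (ha : a ≠ 0) (N : F) (hN : N = a ^ ((q ^ n - 1) / (q ^ d - 1)))
    (hcond : (-1 : F) ^ (n / d) * N ≠ 1) :
    ∀ y : F,
      ((N / (N + (-1) ^ (n / d - 1)) *
            ∑ i ∈ Finset.range (n / d),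
              (-1 : F) ^ i * a⁻¹ ^ ((q ^ ((i + 1) * r) - 1) / (q ^ r - 1)) * y ^ q ^ (i * r))
            ^ q ^ r
          + a * (N / (N + (-1) ^ (n / d - 1)) *
            ∑ i ∈ Finset.range (n / d),
              (-1 : F) ^ i * a⁻¹ ^ ((q ^ ((i + 1) * r) - 1) / (q ^ r - 1)) * y ^ q ^ (i * r))
          = y) ∧
      ∀ x : F, x ^ q ^ r + a * x = y →
        x = N / (N + (-1) ^ (n / d - 1)) *
            ∑ i ∈ Finset.range (n / d),
              (-1 : F) ^ i * a⁻¹ ^ ((q ^ ((i + 1) * r) - 1) / (q ^ r - 1)) * y ^ q ^ (i * r) :=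
  stmt_19_general q n r hq hr d hd F hF a ha N hN hcond
end
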